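/- arXiv:2303.17419 — 12 statements merged into one kernel-verified Lean document; each statement's English description precedes it below -/
import Mathlib

section
/- Let T be a tree. Then no edge contained in some-but-not-all maximum matchings of T shares a vertex with an edge contained in every maximum matching of T. -/
open Finset

/-- A matching of a simple graph: a set of edges of the graph that are pairwise disjoint. -/
def IsMatching {V : Type*} [DecidableEq V] (G : SimpleGraph V) (M : Finset (Sym2 V)) : Prop :=
  (↑M ⊆ G.edgeSet) ∧ ∀ e ∈ M, ∀ f ∈ M, e ≠ f → ∀ v : V, v ∈ e → v ∉ f

/-- A maximum matching: a matching of maximum cardinality. -/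
def IsMaxMatching {V : Type*} [Fintype V] [DecidableEq V] (G : SimpleGraph V)
    (M : Finset (Sym2 V)) : Prop :=
  IsMatching G M ∧ ∀ M' : Finset (Sym2 V), IsMatching G M' → M'.card ≤ M.card

theorem stmt1_general {V : Type*} [Fintype V] [DecidableEq V] (T : SimpleGraph V)
    (e f : Sym2 V)
    (he₁ : ∃ M, IsMaxMatching T M ∧ e ∈ M)
    (he₂ : ∃ M, IsMaxMatching T M ∧ e ∉ M)
    (hf : ∀ M, IsMaxMatching T M → f ∈ M) :
    ∀ v : V, v ∈ e → v ∉ f := by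
  obtain ⟨M₁, hM₁, heM₁⟩ := he₁
  obtain ⟨M₂, hM₂, heM₂⟩ := he₂
  have hef : e ≠ f := fun h => heM₂ (h ▸ hf M₂ hM₂)
  exact hM₁.1.2 e heM₁ f (hf M₁ hM₁) hef

/-- In a tree, an edge contained in some but not all maximum matchings
(an "optional" edge) shares no vertex with an edge contained in every maximum matching
(a "mandatory" edge). -/
theorem stmt1 {V : Type*} [Fintype V] [DecidableEq V] (T : SimpleGraph V) (hT : T.IsTree)
    (e f : Sym2 V)
    (he₁ : ∃ M, IsMaxMatching T M ∧ e ∈ M)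
    (he₂ : ∃ M, IsMaxMatching T M ∧ e ∉ M)
    (hf : ∀ M, IsMaxMatching T M → f ∈ M) :
    ∀ v : V, v ∈ e → v ∉ f :=
  stmt1_general T e f he₁ he₂ hf
end

section
/- Let T be a tree in which the distance between any pair of pendant (degree-one) vertices is even. If C is the unique minimum vertex cover of T, then a vertex v is saturated by every maximum matching of T if and only if v ∈ C. -/
open Finset

/-- A vertex cover: a set of vertices meeting every edge. -/
def IsCover {V : Type*} (G : SimpleGraph V) (C : Finset V) : Prop :=
  ∀ e ∈ G.edgeSet, ∃ v ∈ C, v ∈ e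

/-- A minimum vertex cover: a vertex cover of minimum cardinality. -/
def IsMinCover {V : Type*} [Fintype V] (G : SimpleGraph V) (C : Finset V) : Prop :=
  IsCover G C ∧ ∀ C' : Finset V, IsCover G C' → C.card ≤ C'.card

/-!
Root `T` at a pendant vertex `x` and let `A` be the set of vertices at odd distance from `x`.
Then `A` is an independent vertex cover, and by the parity hypothesis no vertex of `A` is
pendant, so every nonempty `S ⊆ A` has at least `|S| + 1` neighbours (distinct children, plus
the parent of a vertex of `S` nearest to `x`). By Hall's theorem, for every `w ∉ A` some matching
of size `|A|` saturates `A` and misses `w`. As no matching is larger than a cover, these matchings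
are maximum and `A` is a minimum cover, so `A = C`. Hence a vertex outside `C` is missed by a
maximum matching, while a maximum matching has `|C|` edges, each meeting `C` in its own vertex,
so it saturates all of `C`.
-/

open SimpleGraph

section MatchingCover

variable {V : Type*} [DecidableEq V] {G : SimpleGraph V} {M : Finset (Sym2 V)} {C : Finset V}

lemma IsMatching.exists_injOn_of_isCover (hM : IsMatching G M) (hC : IsCover G C) :
    ∃ g : Sym2 V → V, Set.MapsTo g M C ∧ Set.InjOn g M ∧ ∀ e ∈ M, g e ∈ e := by
  have hex : ∀ e : Sym2 V, ∃ v ∈ e, e ∈ M → v ∈ C := fun e => by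
    by_cases he : e ∈ M
    · obtain ⟨v, hvC, hve⟩ := hC e (hM.1 he)
      exact ⟨v, hve, fun _ => hvC⟩
    · exact ⟨_, Sym2.out_fst_mem e, fun h => absurd h he⟩
  choose g hge hgC using hex
  refine ⟨g, fun e he => hgC e he, fun e he e' he' heq => ?_, fun e _ => hge e⟩
  by_contra hne
  exact hM.2 e he e' he' hne (g e) (hge e) (heq ▸ hge e')

lemma IsMatching.card_le_card_of_isCover (hM : IsMatching G M) (hC : IsCover G C) :
    #M ≤ #C := by
  obtain ⟨g, hmaps, hinj, -⟩ := hM.exists_injOn_of_isCover hC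
  exact card_le_card_of_injOn g hmaps hinj

lemma IsMatching.exists_mem_of_isCover_of_card_le (hM : IsMatching G M) (hC : IsCover G C)
    (hcard : #C ≤ #M) {v : V} (hv : v ∈ C) : ∃ e ∈ M, v ∈ e := by
  obtain ⟨g, hmaps, hinj, hg⟩ := hM.exists_injOn_of_isCover hC
  have himage : M.image g = C :=
    eq_of_subset_of_card_le (fun _ hy => by
      obtain ⟨e, he, rfl⟩ := mem_image.mp hy
      exact hmaps he) (by rwa [card_image_of_injOn hinj])
  obtain ⟨e, he, rfl⟩ := mem_image.mp (himage ▸ hv)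
  exact ⟨e, he, hg e he⟩

variable [Fintype V]

lemma IsMatching.isMaxMatching_of_card_eq (hM : IsMatching G M) (hC : IsCover G C)
    (hcard : #M = #C) : IsMaxMatching G M :=
  ⟨hM, fun _ hM' => hcard ▸ hM'.card_le_card_of_isCover hC⟩

lemma IsCover.isMinCover_of_card_eq (hC : IsCover G C) (hM : IsMatching G M)
    (hcard : #M = #C) : IsMinCover G C :=
  ⟨hC, fun _ hC' => hcard ▸ hM.card_le_card_of_isCover hC'⟩

end MatchingCover

section Hall

variable {V : Type*} [Fintype V] [DecidableEq V] {G : SimpleGraph V} [DecidableRel G.Adj]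

/-- Hall's theorem; the surplus pays for deleting `w`. -/
lemma exists_injective_adj_ne_of_surplus {A : Finset V}
    (hsurplus : ∀ S ⊆ A, S.Nonempty → #S + 1 ≤ #(S.biUnion fun s => G.neighborFinset s))
    (w : V) : ∃ f : A → V, Function.Injective f ∧ ∀ a : A, G.Adj a (f a) ∧ f a ≠ w := by
  have hall : ∀ s : Finset A, #s ≤ #(s.biUnion fun a => G.neighborFinset a \ {w}) := by
    intro s
    rcases s.eq_empty_or_nonempty with rfl | hs
    · simp
    set S := s.map (Function.Embedding.subtype _)
    have hS := hsurplus S (fun _ h => property_of_mem_map_subtype s h) (hs.map)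
    have hsub : (S.biUnion fun s => G.neighborFinset s) \ {w} ⊆
        s.biUnion fun a => G.neighborFinset a \ {w} := by
      intro y
      simp only [S, mem_sdiff, mem_biUnion, mem_map, Function.Embedding.coe_subtype]
      rintro ⟨⟨_, ⟨a, ha, rfl⟩, hy⟩, hyw⟩
      exact ⟨a, ha, hy, hyw⟩
    have hdel :=
      card_le_card_sdiff_add_card (s := S.biUnion fun s => G.neighborFinset s) (t := {w})
    rw [card_singleton] at hdel
    calc #s = #S := (card_map _).symm
      _ ≤ #((S.biUnion fun s => G.neighborFinset s) \ {w}) := by omega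
      _ ≤ _ := card_le_card hsub
  obtain ⟨f, hinj, hf⟩ := (all_card_le_biUnion_card_iff_exists_injective _).mp hall
  refine ⟨f, hinj, fun a => ?_⟩
  simpa using hf a

lemma exists_isMatching_card_eq_avoiding {A : Finset V}
    (hindep : ∀ a ∈ A, ∀ b ∈ A, ¬ G.Adj a b)
    (hsurplus : ∀ S ⊆ A, S.Nonempty → #S + 1 ≤ #(S.biUnion fun s => G.neighborFinset s))
    {w : V} (hw : w ∉ A) :
    ∃ M : Finset (Sym2 V), IsMatching G M ∧ #M = #A ∧ ∀ e ∈ M, w ∉ e := by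
  obtain ⟨f, hinj, hf⟩ := exists_injective_adj_ne_of_surplus hsurplus w
  have hfA : ∀ a : A, f a ∉ A := fun a hfa => hindep a a.2 _ hfa (hf a).1
  refine ⟨A.attach.image fun a : A => s((a : V), f a), ⟨?_, ?_⟩, ?_, ?_⟩
  · intro e he
    obtain ⟨a, -, rfl⟩ := mem_image.mp he
    exact (hf a).1
  · simp only [mem_image, mem_attach, true_and]
    rintro _ ⟨a, rfl⟩ _ ⟨b, rfl⟩ hne v hva hvb
    rw [Sym2.mem_iff] at hva hvb
    rcases hva with rfl | rfl <;> rcases hvb with h | h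
    · exact hne (by rw [Subtype.ext h])
    · exact hfA b (h ▸ a.2)
    · exact hfA a (h ▸ b.2)
    · exact hne (by rw [hinj h])
  · rw [card_image_of_injective _ fun a b hab => ?_, card_attach]
    rcases Sym2.eq_iff.mp hab with ⟨h, -⟩ | ⟨h, -⟩
    · exact Subtype.ext h
    · exact absurd (h ▸ a.2) (hfA b)
  · simp only [mem_image, mem_attach, true_and]
    rintro _ ⟨a, rfl⟩ hwe
    rcases Sym2.mem_iff.mp hwe with rfl | h
    · exact hw a.2
    · exact (hf a).2 h.symm

end Hall

namespace SimpleGraph.IsTree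

variable {V : Type*} {T : SimpleGraph V}

lemma eq_penultimate_of_dist_eq_add_one (hT : T.IsTree) {x p c : V} (hadj : T.Adj p c)
    (hd : T.dist x c = T.dist x p + 1) {q : T.Walk x c} (hq : q.IsPath) : p = q.penultimate := by
  classical
  obtain ⟨Q, hQ, hQlen⟩ := hT.connected.exists_path_of_dist x p
  have hc : c ∉ Q.support := fun hc => by
    have := T.dist_le (Q.takeUntil c hc)
    have := Q.length_takeUntil_le_length hc
    omega
  exact hT.isAcyclic.eq_penultimate_of_adj_end hq hadj.symm
    (hT.isAcyclic.mem_support_of_ne_mem_support_of_adj_of_isPath hq hQ hadj.symm hc)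

lemma eq_of_dist_eq_add_one (hT : T.IsTree) {x p₁ p₂ c : V} (h₁ : T.Adj p₁ c)
    (h₂ : T.Adj p₂ c) (hd₁ : T.dist x c = T.dist x p₁ + 1)
    (hd₂ : T.dist x c = T.dist x p₂ + 1) : p₁ = p₂ := by
  obtain ⟨q, hq⟩ := hT.connected.exists_isPath x c
  rw [hT.eq_penultimate_of_dist_eq_add_one h₁ hd₁ hq,
    hT.eq_penultimate_of_dist_eq_add_one h₂ hd₂ hq]

lemma exists_adj_dist_eq_add_one (hT : T.IsTree) {x s : V} (hne : x ≠ s) :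
    ∃ p, T.Adj p s ∧ T.dist x s = T.dist x p + 1 := by
  obtain ⟨P, -, hPlen⟩ := hT.connected.exists_path_of_dist x s
  have hnil := Walk.not_nil_of_ne (p := P) hne
  have hadj := P.adj_penultimate hnil
  have := T.dist_le P.dropLast
  rw [Walk.length_dropLast] at this
  refine ⟨_, hadj, ?_⟩
  rcases hT.dist_eq_dist_add_one_of_adj x hadj with h | h <;> omega

lemma odd_dist_iff_even_of_adj (hT : T.IsTree) (x : V) {a b : V} (hab : T.Adj a b) :
    Odd (T.dist x a) ↔ Even (T.dist x b) := by
  rcases hT.dist_eq_dist_add_one_of_adj x hab with h | h <;>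
    simp [h, Nat.odd_add_one, Nat.even_add_one]

lemma exists_adj_dist_eq_add_one_of_two_le_degree [Fintype V] [DecidableRel T.Adj]
    (hT : T.IsTree) (x : V) {s : V} (hs : 2 ≤ T.degree s) :
    ∃ c, T.Adj s c ∧ T.dist x c = T.dist x s + 1 := by
  rw [← card_neighborFinset_eq_degree] at hs
  obtain ⟨c₁, hc₁, c₂, hc₂, hne⟩ := one_lt_card.mp hs
  rw [mem_neighborFinset] at hc₁ hc₂
  rcases hT.dist_eq_dist_add_one_of_adj x hc₁ with h₁ | h₁
  · rcases hT.dist_eq_dist_add_one_of_adj x hc₂ with h₂ | h₂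
    · exact absurd (hT.eq_of_dist_eq_add_one hc₁.symm hc₂.symm h₁ h₂) hne
    · exact ⟨c₂, hc₂, h₂⟩
  · exact ⟨c₁, hc₁, h₁⟩

/-- Each `s ∈ S` has a child, distinct vertices have distinct children, and the parent of an
element of `S` closest to the root is nobody's child. -/
theorem card_add_one_le_card_biUnion_neighborFinset [Fintype V] [DecidableEq V]
    [DecidableRel T.Adj] (hT : T.IsTree) (x : V) {S : Finset V} (hS : S.Nonempty)
    (hx : x ∉ S) (hdeg : ∀ s ∈ S, 2 ≤ T.degree s) :
    #S + 1 ≤ #(S.biUnion fun s => T.neighborFinset s) := by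
  choose! child hadj hdist using
    fun s hs => hT.exists_adj_dist_eq_add_one_of_two_le_degree x (hdeg s hs)
  obtain ⟨s₀, hs₀, hmin⟩ := S.exists_min_image (T.dist x) hS
  obtain ⟨p₀, hp₀, hdp₀⟩ :=
    hT.exists_adj_dist_eq_add_one (ne_of_mem_of_not_mem hs₀ hx).symm
  have hinj : Set.InjOn child S := fun a ha b hb hab =>
    hT.eq_of_dist_eq_add_one (hadj a ha) (hab ▸ hadj b hb) (hdist a ha) (hab ▸ hdist b hb)
  have hp₀child : p₀ ∉ S.image child := by
    rw [mem_image]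
    rintro ⟨s, hs, rfl⟩
    have := hdist s hs
    have := hmin s hs
    omega
  have hsub : insert p₀ (S.image child) ⊆ S.biUnion fun s => T.neighborFinset s := by
    intro y hy
    rw [mem_biUnion]
    rcases mem_insert.mp hy with rfl | hy
    · exact ⟨s₀, hs₀, (mem_neighborFinset _ _ _).mpr hp₀.symm⟩
    · obtain ⟨s, hs, rfl⟩ := mem_image.mp hy
      exact ⟨s, hs, (mem_neighborFinset _ _ _).mpr (hadj s hs)⟩
  calc #S + 1 = #(insert p₀ (S.image child)) := by
        rw [card_insert_of_notMem hp₀child, card_image_of_injOn hinj]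
    _ ≤ _ := card_le_card hsub

end SimpleGraph.IsTree

namespace SimpleGraph

variable {V : Type*} [Fintype V] {T : SimpleGraph V}

noncomputable def oddLevels (T : SimpleGraph V) (x : V) : Finset V :=
  {u | Odd (T.dist x u)}

lemma mem_oddLevels {x u : V} : u ∈ oddLevels T x ↔ Odd (T.dist x u) := by
  simp [oddLevels]

lemma root_notMem_oddLevels (x : V) : x ∉ oddLevels T x := by
  simp [mem_oddLevels]

lemma IsTree.isCover_oddLevels (hT : T.IsTree) (x : V) : IsCover T (oddLevels T x) := by
  refine Sym2.ind fun a b hab => ?_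
  by_cases ha : Odd (T.dist x a)
  · exact ⟨a, mem_oddLevels.mpr ha, Sym2.mem_mk_left a b⟩
  · have hb := (hT.odd_dist_iff_even_of_adj x hab.symm).mpr (Nat.not_odd_iff_even.mp ha)
    exact ⟨b, mem_oddLevels.mpr hb, Sym2.mem_mk_right a b⟩

lemma IsTree.not_adj_of_mem_oddLevels (hT : T.IsTree) {x a b : V} (ha : a ∈ oddLevels T x)
    (hb : b ∈ oddLevels T x) : ¬ T.Adj a b := fun hab =>
  Nat.not_even_iff_odd.mpr (mem_oddLevels.mp hb)
    ((hT.odd_dist_iff_even_of_adj x hab).mp (mem_oddLevels.mp ha))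

variable [DecidableRel T.Adj]

/-- Root the tree at a pendant vertex: no pendant vertex lies at odd distance from it. -/
lemma IsTree.exists_two_le_degree_of_mem_oddLevels (hT : T.IsTree)
    (hbc : ∀ u v : V, T.degree u = 1 → T.degree v = 1 → Even (T.dist u v)) :
    ∃ x, ∀ s ∈ oddLevels T x, 2 ≤ T.degree s := by
  rcases subsingleton_or_nontrivial V with hV | hV
  · refine ⟨hT.connected.nonempty.some, fun s hs => ?_⟩
    rw [mem_oddLevels, Subsingleton.elim s, dist_self] at hs
    exact absurd hs Nat.not_odd_zero
  · obtain ⟨x, hx⟩ := hT.exists_vert_degree_one_of_nontrivial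
    refine ⟨x, fun s hs => ?_⟩
    have hpos := hT.connected.preconnected.degree_pos_of_nontrivial s
    have hne : T.degree s ≠ 1 := fun hs1 =>
      Nat.not_even_iff_odd.mpr (mem_oddLevels.mp hs) (hbc x s hx hs1)
    omega

lemma IsTree.exists_isMatching_card_eq_oddLevels [DecidableEq V] (hT : T.IsTree) {x : V}
    (hx : ∀ s ∈ oddLevels T x, 2 ≤ T.degree s) {w : V} (hw : w ∉ oddLevels T x) :
    ∃ M : Finset (Sym2 V), IsMatching T M ∧ #M = #(oddLevels T x) ∧ ∀ e ∈ M, w ∉ e :=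
  exists_isMatching_card_eq_avoiding (fun _ ha _ hb => hT.not_adj_of_mem_oddLevels ha hb)
    (fun _ hS hne => hT.card_add_one_le_card_biUnion_neighborFinset x hne
      (fun hxS => root_notMem_oddLevels x (hS hxS)) fun s hs => hx s (hS hs)) hw

end SimpleGraph

theorem stmt3_general {V : Type*} [Fintype V] [DecidableEq V] (T : SimpleGraph V)
    [DecidableRel T.Adj] (hT : T.IsTree)
    (hbc : ∀ u v : V, T.degree u = 1 → T.degree v = 1 → Even (T.dist u v))
    (C : Finset V) (huniq : ∀ C' : Finset V, IsMinCover T C' → C' = C)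
    (v : V) :
    (∀ M : Finset (Sym2 V), IsMaxMatching T M → ∃ e ∈ M, v ∈ e) ↔ v ∈ C := by
  obtain ⟨x, hx⟩ := hT.exists_two_le_degree_of_mem_oddLevels hbc
  have hcover := hT.isCover_oddLevels x
  have hmax_avoiding : ∀ w ∉ oddLevels T x,
      ∃ M, IsMaxMatching T M ∧ #M = #(oddLevels T x) ∧ ∀ e ∈ M, w ∉ e := by
    intro w hw
    obtain ⟨M, hM, hcard, hwM⟩ := hT.exists_isMatching_card_eq_oddLevels hx hw
    exact ⟨M, hM.isMaxMatching_of_card_eq hcover hcard, hcard, hwM⟩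
  obtain ⟨M₀, hM₀, hM₀card, -⟩ := hmax_avoiding x (root_notMem_oddLevels x)
  rw [← huniq _ (hcover.isMinCover_of_card_eq hM₀.1 hM₀card)]
  constructor
  · intro hsat
    by_contra hv
    obtain ⟨M, hM, -, hvM⟩ := hmax_avoiding v hv
    obtain ⟨e, he, hve⟩ := hsat M hM
    exact hvM e he hve
  · intro hv M hM
    exact hM.1.exists_mem_of_isCover_of_card_le hcover (hM₀card ▸ hM.2 M₀ hM₀.1) hv

/-- In a tree whose pendant vertices are pairwise at even distance (a bc-tree),
with unique minimum vertex cover C, a vertex is saturated by every maximum matching iff it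
belongs to C. -/
theorem stmt3 {V : Type*} [Fintype V] [DecidableEq V] (T : SimpleGraph V)
    [DecidableRel T.Adj] (hT : T.IsTree)
    (hbc : ∀ u v : V, T.degree u = 1 → T.degree v = 1 → Even (T.dist u v))
    (C : Finset V) (hC : IsMinCover T C) (huniq : ∀ C' : Finset V, IsMinCover T C' → C' = C)
    (v : V) :
    (∀ M : Finset (Sym2 V), IsMaxMatching T M → ∃ e ∈ M, v ∈ e) ↔ v ∈ C :=
  stmt3_general T hT hbc C huniq v
end

section
/- Let G be a graph and S a subset of its vertices. If S1 and S2 are both sets obtained from S by repeatedly applying the skew zero forcing rule until no further applications are possible, then S1 = S2. That is, the skew zero forcing closure is well-defined. -/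
/-- One application of the skew zero forcing rule: some vertex `v` has exactly one
neighbor `w` outside the filled set `S`, and `w` becomes filled. -/
def SZFStep {V : Type*} (G : SimpleGraph V) (S T : Set V) : Prop :=
  ∃ v w : V, G.Adj v w ∧ w ∉ S ∧ (∀ u : V, G.Adj v u → u ∉ S → u = w) ∧ T = insert w S

/-- A set is stalled (skew zero forcing closed) if no vertex has exactly one neighbor
outside the set, i.e. the skew zero forcing rule cannot be applied. -/
def SZFStalled {V : Type*} (G : SimpleGraph V) (S : Set V) : Prop :=
  ∀ v w : V, G.Adj v w → w ∉ S → ∃ u : V, G.Adj v u ∧ u ∉ S ∧ u ≠ w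

/-- `T` is a skew derived set of `S`: obtained from `S` by repeatedly applying the
skew zero forcing rule until no more applications are possible. -/
def SZFDerived {V : Type*} (G : SimpleGraph V) (S T : Set V) : Prop :=
  Relation.ReflTransGen (SZFStep G) S T ∧ SZFStalled G T

/-! Every stalled superset `U` of `S` absorbs each forcing step: if `v` forces `w` and `w ∉ U`,
then stalledness of `U` gives `v` a second neighbor outside `U`, hence outside the current
filled set, contradicting the uniqueness of `w`. So every derived set lies in every stalled
superset of `S`, and two derived sets, being both, contain each other. -/

theorem SZFStep.subset {V : Type*} {G : SimpleGraph V} {S T : Set V} (h : SZFStep G S T) :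
    S ⊆ T := by
  obtain ⟨_, w, _, _, _, rfl⟩ := h
  exact Set.subset_insert w S

theorem subset_of_reflTransGen_szfStep {V : Type*} {G : SimpleGraph V} {S T : Set V}
    (h : Relation.ReflTransGen (SZFStep G) S T) : S ⊆ T := by
  induction h with
  | refl => exact subset_rfl
  | tail _ hstep ih => exact ih.trans hstep.subset

theorem SZFStalled.reflTransGen_subset {V : Type*} {G : SimpleGraph V} {S T U : Set V}
    (hU : SZFStalled G U) (hSU : S ⊆ U) (h : Relation.ReflTransGen (SZFStep G) S T) :
    T ⊆ U := by
  induction h with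
  | refl => exact hSU
  | tail _ hstep ih =>
    obtain ⟨v, w, hvw, -, hunique, rfl⟩ := hstep
    refine Set.insert_subset (by_contra fun hwU => ?_) ih
    obtain ⟨u, hvu, huU, hne⟩ := hU v w hvw hwU
    exact hne (hunique u hvu fun huT => huU (ih huT))

theorem SZFDerived.subset {V : Type*} {G : SimpleGraph V} {S S₁ S₂ : Set V}
    (h₁ : SZFDerived G S S₁) (h₂ : SZFDerived G S S₂) : S₁ ⊆ S₂ :=
  h₂.2.reflTransGen_subset (subset_of_reflTransGen_szfStep h₂.1) h₁.1

theorem stmt4_general {V : Type*} (G : SimpleGraph V) (S S₁ S₂ : Set V)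
    (h₁ : SZFDerived G S S₁) (h₂ : SZFDerived G S S₂) : S₁ = S₂ :=
  (h₁.subset h₂).antisymm (h₂.subset h₁)

/-- Any two skew derived sets of the same initial set coincide, i.e. the
skew zero forcing closure is well-defined. -/
theorem stmt4 {V : Type*} [Fintype V] (G : SimpleGraph V) (S S₁ S₂ : Set V)
    (h₁ : SZFDerived G S S₁) (h₂ : SZFDerived G S S₂) : S₁ = S₂ :=
  stmt4_general G S S₁ S₂ h₁ h₂
end

section
/- Let T be a tree. A set S ⊆ V(T) is skew zero forcing closed if and only if there exists a vector x in the kernel of the adjacency matrix of T whose set of zero coordinates is exactly S. -/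
open Matrix

/-!
Root the tree at `r`. Give `r` the value `1` (unless `r ∈ S`) and, going down the tree, give the
children of each vertex `v` that lie outside `S` nonzero values summing to minus the value at the
parent of `v` (to `0` if `v = r`); then the kernel equation holds at `v`. This is always possible
because `S` is stalled: `v` has either none or at least two neighbours outside `S`, so its children
outside `S` never form a single vertex that must carry `0`, nor an empty set that must carry a
nonzero amount. Conversely, in any graph, a vertex with exactly one neighbour `w` outside the zero locus of
a kernel vector would force the value at `w` to vanish.
-/

open Finset

theorem exists_ne_zero_sum_eq {ι 𝕜 : Type*} [Field 𝕜] [CharZero 𝕜] (K : Finset ι) (t : 𝕜)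
    (hK : K = ∅ → t = 0) (h1 : #K = 1 → t ≠ 0) :
    ∃ f : ι → 𝕜, (∀ i ∈ K, f i ≠ 0) ∧ ∑ i ∈ K, f i = t := by
  classical
  rcases K.eq_empty_or_nonempty with rfl | ⟨a, ha⟩
  · exact ⟨0, by simp, by simp [hK rfl]⟩
  have hcard : (#K : 𝕜) ≠ 0 := by exact_mod_cast (card_pos.mpr ⟨a, ha⟩).ne'
  by_cases ht : t = 0
  · have hcard1 : (#K : 𝕜) ≠ 1 := by exact_mod_cast fun h => h1 h ht
    refine ⟨fun i => 1 - if i = a then (#K : 𝕜) else 0, fun i _ => ?_, ?_⟩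
    · dsimp only
      split_ifs
      · exact sub_ne_zero.mpr hcard1.symm
      · simp
    · simp [sum_sub_distrib, ha, ht]
  · exact ⟨fun _ => t / #K, fun _ _ => div_ne_zero ht hcard, by
      rw [sum_const, nsmul_eq_mul, mul_div_cancel₀ _ hcard]⟩

noncomputable def splitNonzero {ι 𝕜 : Type*} [Field 𝕜] (K : Finset ι) (t : 𝕜) : ι → 𝕜 :=
  Classical.epsilon fun f => (∀ i ∈ K, f i ≠ 0) ∧ ∑ i ∈ K, f i = t

theorem splitNonzero_spec {ι 𝕜 : Type*} [Field 𝕜] [CharZero 𝕜] {K : Finset ι} {t : 𝕜}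
    (hK : K = ∅ → t = 0) (h1 : #K = 1 → t ≠ 0) :
    (∀ i ∈ K, splitNonzero K t i ≠ 0) ∧ ∑ i ∈ K, splitNonzero K t i = t :=
  Classical.epsilon_spec (exists_ne_zero_sum_eq K t hK h1)

namespace SimpleGraph

variable {V : Type*} {G : SimpleGraph V} {r u v w : V}

theorem Connected.exists_adj_dist_add_one_eq (hG : G.Connected) (hv : v ≠ r) :
    ∃ p, G.Adj v p ∧ G.dist r p + 1 = G.dist r v := by
  obtain ⟨W, hW⟩ := hG.exists_walk_length_eq_dist v r
  cases W with
  | nil => exact absurd rfl hv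
  | @cons _ p _ hadj W =>
    refine ⟨p, hadj, ?_⟩
    have h1 : G.dist p r ≤ W.length := dist_le W
    have h2 : G.dist r v ≤ G.dist r p + G.dist p v := hG.dist_triangle
    rw [dist_eq_one_iff_adj.mpr hadj.symm] at h2
    rw [Walk.length_cons] at hW
    have := dist_comm (G := G) (u := r) (v := p)
    have := dist_comm (G := G) (u := r) (v := v)
    omega

/-- The neighbour of `v` one step closer to the root `r`; a junk value when `v = r`. -/
noncomputable def parent (G : SimpleGraph V) (r v : V) : V :=
  @Classical.epsilon V ⟨v⟩ fun p => G.Adj v p ∧ G.dist r p + 1 = G.dist r v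

theorem Connected.adj_parent (hG : G.Connected) (hv : v ≠ r) : G.Adj v (G.parent r v) :=
  (Classical.epsilon_spec (hG.exists_adj_dist_add_one_eq hv)).1

theorem Connected.dist_parent_add_one (hG : G.Connected) (hv : v ≠ r) :
    G.dist r (G.parent r v) + 1 = G.dist r v :=
  (Classical.epsilon_spec (hG.exists_adj_dist_add_one_eq hv)).2

theorem IsTree.mem_support_of_adj_of_dist_lt (hT : G.IsTree) {P : G.Walk r v} (hP : P.IsPath)
    (hadj : G.Adj v u) (hd : G.dist r u < G.dist r v) : u ∈ P.support := by
  classical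
  obtain ⟨Q, hQ, hQlen⟩ := hT.connected.exists_path_of_dist r u
  refine hT.isAcyclic.mem_support_of_ne_mem_support_of_adj_of_isPath hP hQ hadj fun hvQ => ?_
  have := Q.length_takeUntil_le_length hvQ
  have := dist_le (Q.takeUntil v hvQ)
  omega

theorem IsTree.eq_parent_of_adj (hT : G.IsTree) (hadj : G.Adj v u)
    (hd : G.dist r u + 1 = G.dist r v) : u = G.parent r v := by
  have hv : v ≠ r := by rintro rfl; simp at hd
  obtain ⟨P, hP, -⟩ := hT.connected.exists_path_of_dist r v
  have hpar := hT.connected.dist_parent_add_one hv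
  rw [hT.isAcyclic.eq_penultimate_of_adj_end hP hadj
      (hT.mem_support_of_adj_of_dist_lt hP hadj (by omega)),
    hT.isAcyclic.eq_penultimate_of_adj_end hP (hT.connected.adj_parent hv)
      (hT.mem_support_of_adj_of_dist_lt hP (hT.connected.adj_parent hv) (by omega))]

theorem IsTree.adj_iff_eq_parent (hT : G.IsTree) :
    G.Adj v w ↔ (v ≠ r ∧ w = G.parent r v) ∨ (w ≠ r ∧ v = G.parent r w) := by
  constructor
  · intro hadj
    rcases hT.dist_eq_dist_add_one_of_adj r hadj with h | h
    · exact .inl ⟨by rintro rfl; simp at h, hT.eq_parent_of_adj hadj h.symm⟩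
    · exact .inr ⟨by rintro rfl; simp at h, hT.eq_parent_of_adj hadj.symm h.symm⟩
  · rintro (⟨hv, rfl⟩ | ⟨hw, rfl⟩)
    · exact hT.connected.adj_parent hv
    · exact (hT.connected.adj_parent hw).symm

section children

variable [Fintype V] [DecidableEq V]

noncomputable def children (G : SimpleGraph V) (r v : V) : Finset V :=
  {w | w ≠ r ∧ G.parent r w = v}

@[simp]
theorem mem_children : w ∈ G.children r v ↔ w ≠ r ∧ G.parent r w = v := by
  simp [children]

theorem IsTree.sum_neighborFinset_eq {M : Type*} [AddCommMonoid M] [DecidableRel G.Adj]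
    (hT : G.IsTree) (r : V) (f : V → M) (v : V) :
    ∑ u ∈ G.neighborFinset v, f u =
      (if v = r then 0 else f (G.parent r v)) + ∑ w ∈ G.children r v, f w := by
  split_ifs with hv
  · subst hv
    rw [zero_add]
    congr 1
    ext w
    simp [hT.adj_iff_eq_parent (r := v), eq_comm]
  · have hpar : G.parent r v ∉ G.children r v := by
      intro h
      rw [mem_children] at h
      have h1 := hT.connected.dist_parent_add_one hv
      have h2 := hT.connected.dist_parent_add_one h.1
      rw [h.2] at h2
      omega
    rw [← sum_insert hpar]
    congr 1
    ext w
    simp [hT.adj_iff_eq_parent (r := r), hv, eq_comm]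

open scoped Classical in
noncomputable def childrenOutside (G : SimpleGraph V) (r : V) (S : Set V) (v : V) : Finset V :=
  {w ∈ G.children r v | w ∉ S}

@[simp]
theorem mem_childrenOutside {S : Set V} :
    w ∈ G.childrenOutside r S v ↔ w ≠ r ∧ G.parent r w = v ∧ w ∉ S := by
  simp [childrenOutside, and_assoc]

open scoped Classical in
noncomputable def treeKernelVec (hG : G.Connected) (r : V) (S : Set V) (v : V) : ℝ :=
  if v ∈ S then 0
  else if v = r then 1
  else if G.parent r v = r then splitNonzero (G.childrenOutside r S (G.parent r v)) 0 v
  else splitNonzero (G.childrenOutside r S (G.parent r v))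
    (-treeKernelVec hG r S (G.parent r (G.parent r v))) v
termination_by G.dist r v
decreasing_by
  have := hG.dist_parent_add_one ‹¬v = r›
  have := hG.dist_parent_add_one ‹¬G.parent r v = r›
  omega

/-- What the children of `v` outside `S` must sum to for the kernel equation at `v` to hold. -/
noncomputable def treeKernelDemand (hG : G.Connected) (r : V) (S : Set V) (v : V) : ℝ :=
  if v = r then 0 else -treeKernelVec hG r S (G.parent r v)

variable {hG : G.Connected} {S : Set V}

theorem treeKernelVec_of_mem (hv : v ∈ S) : treeKernelVec hG r S v = 0 := by
  rw [treeKernelVec, if_pos hv]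

theorem treeKernelVec_root (hr : r ∉ S) : treeKernelVec hG r S r = 1 := by
  rw [treeKernelVec, if_neg hr, if_pos rfl]

theorem treeKernelVec_of_notMem (hv : v ∉ S) (hvr : v ≠ r) :
    treeKernelVec hG r S v = splitNonzero (G.childrenOutside r S (G.parent r v))
      (treeKernelDemand hG r S (G.parent r v)) v := by
  rw [treeKernelVec, if_neg hv, if_neg hvr, treeKernelDemand]
  split_ifs <;> rfl

theorem treeKernelDemand_eq_zero_iff
    (h : treeKernelVec hG r S (G.parent r v) = 0 ↔ G.parent r v ∈ S) :
    treeKernelDemand hG r S v = 0 ↔ v = r ∨ G.parent r v ∈ S := by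
  unfold treeKernelDemand
  split_ifs with hv <;> simp [hv, h]

end children

end SimpleGraph

open SimpleGraph

namespace SZFStalled

variable {V : Type*} {G : SimpleGraph V} {r v : V} {S : Set V} [Fintype V] [DecidableEq V]

theorem childrenOutside_nonempty (hT : G.IsTree) (hS : SZFStalled G S)
    (hv : v ≠ r) (hp : G.parent r v ∉ S) : (G.childrenOutside r S v).Nonempty := by
  obtain ⟨u, hvu, huS, hu⟩ := hS v _ (hT.connected.adj_parent hv) hp
  rcases (hT.adj_iff_eq_parent (r := r)).mp hvu with ⟨-, rfl⟩ | ⟨hur, rfl⟩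
  · exact absurd rfl hu
  · exact ⟨u, mem_childrenOutside.mpr ⟨hur, rfl, huS⟩⟩

theorem card_childrenOutside_ne_one (hT : G.IsTree) (hS : SZFStalled G S)
    (h : v = r ∨ G.parent r v ∈ S) : #(G.childrenOutside r S v) ≠ 1 := by
  intro h1
  obtain ⟨a, ha⟩ := card_eq_one.mp h1
  have haK : a ∈ G.childrenOutside r S v := ha ▸ mem_singleton_self a
  obtain ⟨har, hpa, haS⟩ := mem_childrenOutside.mp haK
  obtain ⟨u, hvu, huS, hua⟩ := hS v a (hpa ▸ (hT.connected.adj_parent har).symm) haS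
  rcases (hT.adj_iff_eq_parent (r := r)).mp hvu with ⟨hv, rfl⟩ | ⟨hur, hpu⟩
  · exact h.elim hv huS
  · have : u ∈ G.childrenOutside r S v := mem_childrenOutside.mpr ⟨hur, hpu.symm, huS⟩
    exact hua (mem_singleton.mp (ha ▸ this))

theorem splitNonzero_childrenOutside_spec (hT : G.IsTree) (hS : SZFStalled G S)
    (hd : treeKernelDemand hG r S v = 0 ↔ v = r ∨ G.parent r v ∈ S) :
    let K := G.childrenOutside r S v
    (∀ w ∈ K, splitNonzero K (treeKernelDemand hG r S v) w ≠ 0) ∧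
      ∑ w ∈ K, splitNonzero K (treeKernelDemand hG r S v) w = treeKernelDemand hG r S v := by
  refine splitNonzero_spec (fun hK => ?_) (fun h1 => ?_)
  · by_contra h
    obtain ⟨hv, hp⟩ := not_or.mp (mt hd.mpr h)
    simpa [hK] using hS.childrenOutside_nonempty hT hv hp
  · exact mt hd.mp (mt (hS.card_childrenOutside_ne_one hT) (not_not.mpr h1))

theorem treeKernelVec_eq_zero_iff (hT : G.IsTree) (hS : SZFStalled G S) (v : V) :
    treeKernelVec hT.connected r S v = 0 ↔ v ∈ S := by
  induction hn : G.dist r v using Nat.strong_induction_on generalizing v with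
  | _ n ih =>
  by_cases hvS : v ∈ S
  · simp [treeKernelVec_of_mem hvS, hvS]
  by_cases hvr : v = r
  · subst hvr
    simp [treeKernelVec_root hvS, hvS]
  rw [iff_false_right hvS, treeKernelVec_of_notMem hvS hvr]
  have hpar := hT.connected.dist_parent_add_one hvr
  have hd : treeKernelDemand hT.connected r S (G.parent r v) = 0 ↔
      G.parent r v = r ∨ G.parent r (G.parent r v) ∈ S := by
    by_cases hp : G.parent r v = r
    · simp [treeKernelDemand, hp]
    · exact treeKernelDemand_eq_zero_iff
        (ih _ (by have := hT.connected.dist_parent_add_one hp; omega) _ rfl)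
  exact (hS.splitNonzero_childrenOutside_spec hT hd).1 v
    (mem_childrenOutside.mpr ⟨hvr, rfl, hvS⟩)

theorem sum_children_treeKernelVec (hT : G.IsTree) (hS : SZFStalled G S) (v : V) :
    ∑ w ∈ G.children r v, treeKernelVec hT.connected r S w =
      treeKernelDemand hT.connected r S v := by
  classical
  have hzero := hS.treeKernelVec_eq_zero_iff (r := r) hT
  have hd : treeKernelDemand hT.connected r S v = 0 ↔ v = r ∨ G.parent r v ∈ S := by
    by_cases hv : v = r
    · simp [treeKernelDemand, hv]
    · exact treeKernelDemand_eq_zero_iff (hzero _)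
  let K := G.childrenOutside r S v
  calc ∑ w ∈ G.children r v, treeKernelVec hT.connected r S w
      = ∑ w ∈ K, treeKernelVec hT.connected r S w :=
        (sum_filter_of_ne fun w _ hw => mt (hzero w).mpr hw).symm
    _ = ∑ w ∈ K, splitNonzero K (treeKernelDemand hT.connected r S v) w := by
        refine sum_congr rfl fun w hw => ?_
        obtain ⟨hwr, rfl, hwS⟩ := mem_childrenOutside.mp hw
        exact treeKernelVec_of_notMem hwS hwr
    _ = treeKernelDemand hT.connected r S v := (hS.splitNonzero_childrenOutside_spec hT hd).2

end SZFStalled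

theorem SZFStalled.exists_mulVec_eq_zero {V : Type*} [Fintype V] {G : SimpleGraph V}
    [DecidableRel G.Adj] {S : Set V} (hT : G.IsTree) (hS : SZFStalled G S) :
    ∃ x : V → ℝ, G.adjMatrix ℝ *ᵥ x = 0 ∧ {v | x v = 0} = S := by
  classical
  obtain ⟨r⟩ := hT.connected.nonempty
  refine ⟨treeKernelVec hT.connected r S, funext fun v => ?_,
    Set.ext (hS.treeKernelVec_eq_zero_iff hT)⟩
  rw [adjMatrix_mulVec_apply, hT.sum_neighborFinset_eq r, hS.sum_children_treeKernelVec hT,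
    treeKernelDemand]
  split_ifs <;> simp

theorem szfStalled_setOf_eq_zero {V α : Type*} [Fintype V] [NonAssocSemiring α]
    {G : SimpleGraph V} [DecidableRel G.Adj] {x : V → α} (hx : G.adjMatrix α *ᵥ x = 0) :
    SZFStalled G {v | x v = 0} := by
  intro v w hvw hw
  by_contra! h
  have hsum : ∑ u ∈ G.neighborFinset v, x u = x w :=
    sum_eq_single_of_mem w ((G.mem_neighborFinset v w).mpr hvw) fun u hu huw =>
      not_not.mp fun hu0 => huw (h u ((G.mem_neighborFinset v u).mp hu) hu0)
  rw [← adjMatrix_mulVec_apply, hx, Pi.zero_apply] at hsum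
  exact hw hsum.symm

theorem stmt6_general {V : Type*} [Fintype V] (T : SimpleGraph V)
    [DecidableRel T.Adj] (hT : T.IsTree) (S : Set V) :
    SZFStalled T S ↔ ∃ x : V → ℝ, T.adjMatrix ℝ *ᵥ x = 0 ∧ {v : V | x v = 0} = S := by
  refine ⟨fun hS => hS.exists_mulVec_eq_zero hT, ?_⟩
  rintro ⟨x, hx, rfl⟩
  exact szfStalled_setOf_eq_zero hx

/-- For a tree T, a set S of vertices is skew zero forcing closed iff S is the
zero locus of some vector in the kernel of the adjacency matrix of T. -/
theorem stmt6 {V : Type*} [Fintype V] [DecidableEq V] (T : SimpleGraph V)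
    [DecidableRel T.Adj] (hT : T.IsTree) (S : Set V) :
    SZFStalled T S ↔ ∃ x : V → ℝ, T.adjMatrix ℝ *ᵥ x = 0 ∧ {v : V | x v = 0} = S :=
  stmt6_general T hT S
end

section
/- Let G be a graph and X1, X2 realizable subsets of V(G), i.e., each is the zero locus of some real nullvector of the adjacency matrix of G. Then X1 ∩ X2 is realizable. -/
open Matrix

/-- A set of vertices is realizable if it is the zero locus of some real nullvector of the
adjacency matrix. -/
def Realizable {V : Type*} [Fintype V] [DecidableEq V] (G : SimpleGraph V)
    [DecidableRel G.Adj] (S : Set V) : Prop :=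
  ∃ x : V → ℝ, G.adjMatrix ℝ *ᵥ x = 0 ∧ {v : V | x v = 0} = S

/-- Over an infinite field, `r • x + y` vanishes exactly where both `x` and `y` do as soon as
`r` avoids the finitely many values `-y v / x v`. -/
theorem exists_zeroSet_smul_add_eq_inter {ι K : Type*} [Finite ι] [Field K] [Infinite K]
    (x y : ι → K) :
    ∃ r : K, {v | (r • x + y) v = 0} = {v | x v = 0} ∩ {v | y v = 0} := by
  obtain ⟨r, hr⟩ := (Set.finite_range fun v => -y v / x v).infinite_compl.nonempty
  refine ⟨r, Set.ext fun v => ?_⟩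
  simp only [Set.mem_ofPred_eq, Set.mem_inter_iff, Pi.add_apply, Pi.smul_apply, smul_eq_mul]
  constructor
  · intro h
    have hxv : x v = 0 := by
      by_contra hxv
      exact hr ⟨v, (div_eq_iff hxv).2 (by linear_combination -h)⟩
    exact ⟨hxv, by simpa [hxv] using h⟩
  · rintro ⟨hxv, hyv⟩
    simp [hxv, hyv]

/-- The intersection of two realizable sets is realizable. -/
theorem stmt8 {V : Type*} [Fintype V] [DecidableEq V] (G : SimpleGraph V)
    [DecidableRel G.Adj] (X₁ X₂ : Set V)
    (h₁ : Realizable G X₁) (h₂ : Realizable G X₂) : Realizable G (X₁ ∩ X₂) := by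
  obtain ⟨x, hx, rfl⟩ := h₁
  obtain ⟨y, hy, rfl⟩ := h₂
  obtain ⟨r, hr⟩ := exists_zeroSet_smul_add_eq_inter x y
  exact ⟨r • x + y, by rw [mulVec_add, mulVec_smul, hx, hy, smul_zero, add_zero], hr⟩
end

section
/- Let G be a graph, X ⊆ V(G), and let X̄ be the skew zero forcing closure of X. Then there exists a matching M of G saturating every vertex of X̄ \ X. -/
/-!
Process the forcings `v₁ → w₁, …, vₖ → wₖ` from the last one backwards, keeping a matching that
saturates `{wᵢ₊₁, …, wₖ}`. To add `wᵢ` (if it is not yet saturated), match it to `vᵢ`, dropping the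
edge `vᵢa` that may cover `vᵢ`. The vertex `a` is a neighbour of `vᵢ` other than `wᵢ`, so it was
already filled before step `i`; hence it is none of `wᵢ, …, wₖ` and need not stay saturated.
-/

section

open Finset

variable {V : Type*} [DecidableEq V] {G : SimpleGraph V} {M : Finset (Sym2 V)} {v w : V}

theorem IsMatching.mono {M' : Finset (Sym2 V)} (hM : IsMatching G M) (h : M' ⊆ M) :
    IsMatching G M' :=
  ⟨(coe_subset.mpr h).trans hM.1, fun e he f hf => hM.2 e (h he) f (h hf)⟩

theorem IsMatching.insert_edge (hM : IsMatching G M) (hvw : G.Adj v w)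
    (hfree : ∀ e ∈ M, v ∉ e ∧ w ∉ e) : IsMatching G (insert s(v, w) M) := by
  have hdisj : ∀ e ∈ M, ∀ u ∈ s(v, w), u ∉ e := by
    intro e he u hu
    rcases Sym2.mem_iff.mp hu with rfl | rfl
    exacts [(hfree e he).1, (hfree e he).2]
  refine ⟨by rw [coe_insert]; exact Set.insert_subset hvw hM.1, ?_⟩
  simp only [mem_insert]
  rintro e (rfl | he) f (rfl | hf) hne u hue
  · exact absurd rfl hne
  · exact hdisj f hf u hue
  · exact fun huf => hdisj e he u huf hue
  · exact hM.2 e he f hf hne u hue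

theorem IsMatching.exists_rematch (hM : IsMatching G M) (hvw : G.Adj v w)
    (hw : ∀ e ∈ M, w ∉ e) :
    ∃ M', IsMatching G M' ∧ s(v, w) ∈ M' ∧
      ∀ e ∈ M, ∀ u ∈ e, (∃ e' ∈ M', u ∈ e') ∨ s(v, u) ∈ M := by
  refine ⟨insert s(v, w) (M.filter (v ∉ ·)), ?_, mem_insert_self _ _, ?_⟩
  · refine (hM.mono (filter_subset _ _)).insert_edge hvw fun e he => ?_
    rw [mem_filter] at he
    exact ⟨he.2, hw e he.1⟩
  · intro e he u hu
    by_cases hve : v ∈ e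
    · by_cases huv : u = v
      · exact .inl ⟨s(v, w), mem_insert_self _ _, huv ▸ Sym2.mem_mk_left _ _⟩
      · rw [(Sym2.mem_and_mem_iff (Ne.symm huv)).mp ⟨hve, hu⟩] at he
        exact .inr he
    · exact .inl ⟨e, mem_insert_of_mem (mem_filter.mpr ⟨he, hve⟩), hu⟩

theorem exists_matching_saturating_diff_of_reflTransGen {S T : Set V}
    (h : Relation.ReflTransGen (SZFStep G) S T) :
    ∃ M : Finset (Sym2 V), IsMatching G M ∧ ∀ u ∈ T \ S, ∃ e ∈ M, u ∈ e := by
  induction h using Relation.ReflTransGen.head_induction_on with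
  | refl => exact ⟨∅, ⟨by simp, by simp⟩, by simp⟩
  | @head S _ hstep _ ih =>
    obtain ⟨v, w, hvw, -, hforce, rfl⟩ := hstep
    obtain ⟨M, hM, hsat⟩ := ih
    have hsat' : ∀ u ∈ T \ S, u ≠ w → ∃ e ∈ M, u ∈ e := fun u hu huw =>
      hsat u ⟨hu.1, by simp [huw, hu.2]⟩
    by_cases hw : ∃ e ∈ M, w ∈ e
    · exact ⟨M, hM, fun u hu => if huw : u = w then huw ▸ hw else hsat' u hu huw⟩
    simp only [not_exists, not_and] at hw
    obtain ⟨M', hM', hvwM', hkeep⟩ := hM.exists_rematch hvw hw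
    refine ⟨M', hM', fun u hu => ?_⟩
    by_cases huw : u = w
    · exact ⟨s(v, w), hvwM', huw ▸ Sym2.mem_mk_right _ _⟩
    obtain ⟨e, he, hue⟩ := hsat' u hu huw
    exact (hkeep e he u hue).resolve_right fun hvu => huw (hforce u (hM.1 hvu) hu.2)

end

theorem stmt10_general {V : Type*} [DecidableEq V] (G : SimpleGraph V)
    (X Xbar : Set V) (hX : SZFDerived G X Xbar) :
    ∃ M : Finset (Sym2 V), IsMatching G M ∧ ∀ v ∈ Xbar \ X, ∃ e ∈ M, v ∈ e :=
  exists_matching_saturating_diff_of_reflTransGen hX.1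

/-- There is a matching of G saturating every vertex of X̄ \ X, where X̄ is
the skew zero forcing closure of X. -/
theorem stmt10 {V : Type*} [Fintype V] [DecidableEq V] (G : SimpleGraph V)
    (X Xbar : Set V) (hX : SZFDerived G X Xbar) :
    ∃ M : Finset (Sym2 V), IsMatching G M ∧ ∀ v ∈ Xbar \ X, ∃ e ∈ M, v ∈ e :=
  stmt10_general G X Xbar hX
end

section
/- The cycle C_n is SZF-complete if and only if 4 divides n. In particular, for 4 | n, the SZF-closed sets of C_n are exactly ∅, V(C_n), the set of even-indexed vertices, and the set of odd-indexed vertices, and each is the zero locus of a nullvector. -/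
open Matrix

/-- A graph is SZF-complete if every skew zero forcing closed set of vertices is the zero
locus of some vector in the kernel of its adjacency matrix. -/
def SZFComplete {V : Type*} [Fintype V] [DecidableEq V] (G : SimpleGraph V)
    [DecidableRel G.Adj] : Prop :=
  ∀ S : Set V, SZFStalled G S →
    ∃ x : V → ℝ, G.adjMatrix ℝ *ᵥ x = 0 ∧ {v : V | x v = 0} = S

/-!
On `C_n` the neighbours of `v` are `v - 1` and `v + 1`, so both SZF-closedness of `S` and
`A x = 0` are conditions relating `i` and `i + 2`: `S` is invariant and `x` anti-invariant under
the shift by `2`. An invariant set is determined by parity. If `4 ∣ n`, the indicator of the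
complement of `S` times `(-1) ^ ⌊i / 2⌋` is a nullvector with zero locus `S`. If `4 ∤ n`, some odd
multiple of `2` vanishes in `ℤ/n`, so every nullvector is `0` and `∅` is not a zero locus.
-/

open Function

open scoped Fin.CommRing

theorem Function.Periodic.map_natCast_mod {R β : Type*} [Semiring R] {f : R → β} {c : ℕ}
    (h : Periodic f c) (k : ℕ) : f ((k % c : ℕ) : R) = f k := by
  conv_rhs => rw [← Nat.mod_add_div' k c]
  push_cast
  exact (h.nat_mul _ _).symm

theorem forall_sub_one_add_one_iff {R : Type*} [Ring R] {P : R → R → Prop} :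
    (∀ v, P (v - 1) (v + 1)) ↔ ∀ i, P i (i + 2) := by
  refine ⟨fun h i => ?_, fun h v => ?_⟩
  · have := h (i + 1)
    rwa [add_sub_cancel_right, add_assoc, one_add_one_eq_two] at this
  · have := h (v - 1)
    rwa [← one_add_one_eq_two, ← add_assoc, sub_add_cancel] at this

theorem antiperiodic_neg_one_pow_div_two (R : Type*) [Ring R] :
    Antiperiodic (fun k : ℕ => (-1 : R) ^ (k / 2)) 2 := fun k => by
  simp only [Nat.add_div_right k two_pos, pow_succ, mul_neg_one]

namespace Fin

variable {n : ℕ}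

theorem sub_one_ne_add_one (v : Fin (n + 3)) : v - 1 ≠ v + 1 := by
  rw [Ne, sub_eq_iff_eq_add, add_assoc, left_eq_add, Fin.ext_iff, Fin.val_add, Fin.val_one]
  simp only [Fin.val_zero, Nat.mod_eq_of_lt (show 1 + 1 < n + 3 by omega)]
  omega

theorem periodic_mem_two_iff (h2 : 2 ∣ n + 3) (S : Set (Fin (n + 3))) :
    Periodic (· ∈ S) 2 ↔ S = ∅ ∨ S = Set.univ ∨ S = {i | i.val % 2 = 0} ∨
      S = {i | i.val % 2 = 1} := by
  constructor
  · intro hS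
    have hpar (i : Fin (n + 3)) : i ∈ S ↔ ((i.val % 2 : ℕ) : Fin (n + 3)) ∈ S := by
      have hS' : Periodic (· ∈ S) ((2 : ℕ) : Fin (n + 3)) := by exact_mod_cast hS
      simpa using (hS'.map_natCast_mod i.val).symm
    by_cases h0 : (0 : Fin (n + 3)) ∈ S <;> by_cases h1 : (1 : Fin (n + 3)) ∈ S
    on_goal 1 => right; left
    on_goal 2 => right; right; left
    on_goal 3 => right; right; right
    on_goal 4 => left
    all_goals
      ext i
      rw [hpar]
      rcases Nat.mod_two_eq_zero_or_one i.val with h | h <;> simp [h, h0, h1]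
  · have hval (i : Fin (n + 3)) : (i + 2).val % 2 = i.val % 2 := by
      rw [Fin.val_add, Fin.val_two, Nat.mod_mod_of_dvd _ h2, Nat.add_mod_right]
    rintro (rfl | rfl | rfl | rfl) i <;> simp [hval]

theorem antiperiodic_neg_one_pow_val_div_two (R : Type*) [Ring R] (h4 : 4 ∣ n + 3) :
    Antiperiodic (fun i : Fin (n + 3) => (-1 : R) ^ (i.val / 2)) 2 := fun i => by
  have hg := antiperiodic_neg_one_pow_div_two R
  have hN : Periodic (fun k : ℕ => (-1 : R) ^ (k / 2)) (n + 3) := by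
    obtain ⟨m, hm⟩ := h4
    simpa [hm, mul_comm] using hg.periodic_two_mul.nat_mul m
  simpa [Fin.val_add, Fin.val_two] using (hN.map_natCast_mod (i.val + 2)).trans (hg i.val)

theorem eq_zero_of_antiperiodic_two {R : Type*} [Ring R] [NoZeroDivisors R] [CharZero R]
    (h4 : ¬ 4 ∣ n + 3) {x : Fin (n + 3) → R} (hx : Antiperiodic x 2) : x = 0 := by
  obtain ⟨m, hdvd⟩ : ∃ m, n + 3 ∣ 2 * (2 * m + 1) := by
    rcases Nat.even_or_odd' (n + 3) with ⟨m, hm | hm⟩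
    · exact ⟨m / 2, ⟨1, by omega⟩⟩
    · exact ⟨m, ⟨2, by omega⟩⟩
  have hperiod : (2 * m + 1) • (2 : Fin (n + 3)) = 0 := by
    rw [nsmul_eq_mul, mul_comm]
    exact_mod_cast Fin.natCast_eq_zero.2 hdvd
  have h0 := hx.odd_nsmul_antiperiodic m
  rw [hperiod] at h0
  funext i
  exact CharZero.eq_neg_self_iff.1 (by simpa using h0 i)

end Fin

namespace SimpleGraph

variable {n : ℕ}

theorem cycleGraph_adj_iff_eq_sub_one_or_eq_add_one {v w : Fin (n + 2)} :
    (cycleGraph (n + 2)).Adj v w ↔ w = v - 1 ∨ w = v + 1 := by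
  rw [← mem_neighborSet, cycleGraph_neighborSet]
  rfl

theorem szfStalled_cycleGraph_iff (S : Set (Fin (n + 3))) :
    SZFStalled (cycleGraph (n + 3)) S ↔ Periodic (· ∈ S) 2 := by
  have hnbrs : SZFStalled (cycleGraph (n + 3)) S ↔ ∀ v, (v + 1 ∈ S ↔ v - 1 ∈ S) := by
    simp only [SZFStalled, cycleGraph_adj_iff_eq_sub_one_or_eq_add_one, or_imp,
      exists_eq_or_imp, exists_eq_left]
    refine forall_congr' fun v => ?_
    simp only [forall_and, forall_eq]
    have := Fin.sub_one_ne_add_one v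
    tauto
  rw [hnbrs, forall_sub_one_add_one_iff (P := fun a b => (b ∈ S ↔ a ∈ S))]
  simp only [Periodic, eq_iff_iff]

theorem cycleGraph_adjMatrix_mulVec_apply {R : Type*} [NonAssocSemiring R]
    (x : Fin (n + 3) → R) (v : Fin (n + 3)) :
    ((cycleGraph (n + 3)).adjMatrix R *ᵥ x) v = x (v - 1) + x (v + 1) := by
  rw [adjMatrix_mulVec_apply, cycleGraph_neighborFinset,
    Finset.sum_pair (Fin.sub_one_ne_add_one v)]

theorem cycleGraph_adjMatrix_mulVec_eq_zero_iff {R : Type*} [Ring R] (x : Fin (n + 3) → R) :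
    (cycleGraph (n + 3)).adjMatrix R *ᵥ x = 0 ↔ Antiperiodic x 2 := by
  simp only [funext_iff, cycleGraph_adjMatrix_mulVec_apply, Pi.zero_apply,
    add_eq_zero_iff_eq_neg']
  exact forall_sub_one_add_one_iff (P := fun a b => x b = -x a)

theorem exists_cycleGraph_adjMatrix_mulVec_eq_zero_setOf_eq {R : Type*} [Ring R] [Nontrivial R]
    (h4 : 4 ∣ n + 3) {S : Set (Fin (n + 3))} (hS : Periodic (· ∈ S) 2) :
    ∃ x : Fin (n + 3) → R, (cycleGraph (n + 3)).adjMatrix R *ᵥ x = 0 ∧ {v | x v = 0} = S := by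
  classical
  refine ⟨fun i => (if i ∈ S then 0 else 1) * (-1) ^ (i.val / 2), ?_, ?_⟩
  · rw [cycleGraph_adjMatrix_mulVec_eq_zero_iff]
    intro i
    simp only [hS i, Fin.antiperiodic_neg_one_pow_val_div_two R h4 i, mul_neg]
  · ext i
    by_cases hi : i ∈ S <;> simp [hi, neg_one_pow_ne_zero]

theorem cycleGraph_szfComplete_iff : SZFComplete (cycleGraph (n + 3)) ↔ 4 ∣ n + 3 := by
  refine ⟨fun hc => ?_, fun h4 S hS => exists_cycleGraph_adjMatrix_mulVec_eq_zero_setOf_eq h4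
    ((szfStalled_cycleGraph_iff S).1 hS)⟩
  by_contra h4
  obtain ⟨x, hx, hzero⟩ := hc ∅ ((szfStalled_cycleGraph_iff ∅).2 fun _ => rfl)
  have := Fin.eq_zero_of_antiperiodic_two h4 ((cycleGraph_adjMatrix_mulVec_eq_zero_iff x).1 hx)
  simp [this] at hzero

end SimpleGraph

/-- The cycle C_n (n ≥ 3) is SZF-complete iff 4 ∣ n; moreover, when 4 ∣ n,
the SZF-closed sets of C_n are exactly ∅, the full vertex set, the even-indexed vertices,
and the odd-indexed vertices, and each such set is the zero locus of a nullvector. -/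
theorem stmt12 (n : ℕ) (hn : 3 ≤ n) :
    (SZFComplete (SimpleGraph.cycleGraph n) ↔ 4 ∣ n) ∧
    (4 ∣ n →
      (∀ S : Set (Fin n), SZFStalled (SimpleGraph.cycleGraph n) S ↔
        (S = ∅ ∨ S = Set.univ ∨ S = {i : Fin n | i.val % 2 = 0} ∨
          S = {i : Fin n | i.val % 2 = 1})) ∧
      (∀ S : Set (Fin n), SZFStalled (SimpleGraph.cycleGraph n) S →
        ∃ x : Fin n → ℝ, (SimpleGraph.cycleGraph n).adjMatrix ℝ *ᵥ x = 0 ∧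
          {v : Fin n | x v = 0} = S)) := by
  obtain ⟨m, rfl⟩ : ∃ m, n = m + 3 := ⟨n - 3, by omega⟩
  refine ⟨SimpleGraph.cycleGraph_szfComplete_iff, fun h4 => ⟨fun S => ?_,
    SimpleGraph.cycleGraph_szfComplete_iff.2 h4⟩⟩
  rw [SimpleGraph.szfStalled_cycleGraph_iff]
  exact Fin.periodic_mem_two_iff (dvd_trans ⟨2, rfl⟩ h4) S
end

section
/- The complete bipartite graph K_{m,n} is SZF-complete: every subset X of its vertices such that no vertex has exactly one neighbor outside X is the zero locus of some adjacency nullvector. -/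
/-!
The adjacency matrix of `K_{m,n}` sends `x` to the vector whose entries on one side all equal the
sum of `x` over the other side. So `x` is a nullvector as soon as its restriction to each side sums
to zero, and a function on a finite set with prescribed support `T` and zero sum exists
exactly when `|T| ≠ 1`. Stalledness of `X` rules out `|T| = 1` for the complement of `X` in each
side, since any vertex of the opposite side is adjacent to all of it.
-/

open Matrix
open scoped Classical

theorem exists_eq_zero_iff_and_sum_eq_zero_of_not_existsUnique {α K : Type*} [Fintype α]
    [Field K] [CharZero K] {p : α → Prop} (hp : ¬ ∃! a, p a) :
    ∃ g : α → K, (∀ a, g a = 0 ↔ ¬ p a) ∧ ∑ a, g a = 0 := by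
  by_cases hex : ∃ a, p a
  swap
  · exact ⟨0, fun a => by simpa using not_exists.mp hex a, by simp⟩
  obtain ⟨t₀, ht₀⟩ := hex
  obtain ⟨t₁, ht₁, hne⟩ : ∃ t₁, p t₁ ∧ t₁ ≠ t₀ := by
    by_contra! h
    exact hp ⟨t₀, ht₀, h⟩
  set T := Finset.univ.filter p
  have hT : (T.card : K) ≠ 1 := by
    rw [Ne, Nat.cast_eq_one, ← Ne]
    exact (Finset.one_lt_card.mpr ⟨t₁, by simpa [T], t₀, by simpa [T], hne⟩).ne'
  -- the indicator of `T`, shifted at `t₀` so that the sum vanishes; `t₀` stays in the support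
  -- because `|T| ≠ 1`
  refine ⟨fun a => (if p a then 1 else 0) - if a = t₀ then (T.card : K) else 0, fun a => ?_, ?_⟩
  · by_cases ha : a = t₀
    · subst ha
      simp [ht₀, sub_eq_zero, hT.symm]
    · by_cases hpa : p a <;> simp [ha, hpa]
  · simp [Finset.sum_sub_distrib, Finset.sum_boole, T]

theorem exists_eq_zero_iff_and_sum_eq_zero {α K : Type*} [Fintype α] [Field K] [CharZero K]
    (p : α → Prop) :
    ∃ g : α → K, (∀ a, g a = 0 ↔ ¬ p a) ∧ ((¬ ∃! a, p a) → ∑ a, g a = 0) := by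
  by_cases hp : ∃! a, p a
  · exact ⟨fun a => if p a then 1 else 0, fun a => by by_cases hpa : p a <;> simp [hpa],
      absurd hp⟩
  · obtain ⟨g, hg, hsum⟩ := exists_eq_zero_iff_and_sum_eq_zero_of_not_existsUnique (K := K) hp
    exact ⟨g, hg, fun _ => hsum⟩

theorem SZFStalled.not_existsUnique {V : Type*} {G : SimpleGraph V} {X : Set V}
    (hX : SZFStalled G X) (v : V) : ¬ ∃! w, G.Adj v w ∧ w ∉ X := by
  rintro ⟨w, ⟨hvw, hw⟩, huniq⟩
  obtain ⟨u, hvu, hu, hne⟩ := hX v w hvw hw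
  exact hne (huniq u ⟨hvu, hu⟩)

section completeBipartiteGraph

variable {V W : Type*}

theorem completeBipartiteGraph_adjMatrix_mulVec_inl [Fintype V] [Fintype W] {R : Type*}
    [NonAssocSemiring R] (x : V ⊕ W → R) (i : V) :
    ((completeBipartiteGraph V W).adjMatrix R *ᵥ x) (.inl i) = ∑ j, x (.inr j) := by
  simp [mulVec, dotProduct, SimpleGraph.adjMatrix_apply, Fintype.sum_sum_type]

theorem completeBipartiteGraph_adjMatrix_mulVec_inr [Fintype V] [Fintype W] {R : Type*}
    [NonAssocSemiring R] (x : V ⊕ W → R) (j : W) :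
    ((completeBipartiteGraph V W).adjMatrix R *ᵥ x) (.inr j) = ∑ i, x (.inl i) := by
  simp [mulVec, dotProduct, SimpleGraph.adjMatrix_apply, Fintype.sum_sum_type]

theorem SZFStalled.not_existsUnique_inl_notMem {X : Set (V ⊕ W)}
    (hX : SZFStalled (completeBipartiteGraph V W) X) (j : W) : ¬ ∃! i, Sum.inl i ∉ X := by
  rintro ⟨i, hi, huniq⟩
  refine hX.not_existsUnique (.inr j) ⟨.inl i, ⟨by simp, hi⟩, ?_⟩
  rintro (i' | j') ⟨hadj, hi'⟩
  · rw [huniq i' hi']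
  · simp at hadj

theorem SZFStalled.not_existsUnique_inr_notMem {X : Set (V ⊕ W)}
    (hX : SZFStalled (completeBipartiteGraph V W) X) (i : V) : ¬ ∃! j, Sum.inr j ∉ X := by
  rintro ⟨j, hj, huniq⟩
  refine hX.not_existsUnique (.inl i) ⟨.inr j, ⟨by simp, hj⟩, ?_⟩
  rintro (i' | j') ⟨hadj, hj'⟩
  · simp at hadj
  · rw [huniq j' hj']

end completeBipartiteGraph

/-- The complete bipartite graph K_{m,n} is SZF-complete: every skew zero
forcing closed vertex set is the zero locus of an adjacency nullvector. -/
theorem stmt13 (m n : ℕ) (X : Set (Fin m ⊕ Fin n))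
    (hX : SZFStalled (completeBipartiteGraph (Fin m) (Fin n)) X) :
    ∃ x : Fin m ⊕ Fin n → ℝ,
      (completeBipartiteGraph (Fin m) (Fin n)).adjMatrix ℝ *ᵥ x = 0 ∧
      {v : Fin m ⊕ Fin n | x v = 0} = X := by
  obtain ⟨f, hf, hf_sum⟩ := exists_eq_zero_iff_and_sum_eq_zero (K := ℝ) (fun i => .inl i ∉ X)
  obtain ⟨g, hg, hg_sum⟩ := exists_eq_zero_iff_and_sum_eq_zero (K := ℝ) (fun j => .inr j ∉ X)
  refine ⟨Sum.elim f g, funext ?_, ?_⟩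
  · rintro (i | j)
    · rw [completeBipartiteGraph_adjMatrix_mulVec_inl]
      exact hg_sum (hX.not_existsUnique_inr_notMem i)
    · rw [completeBipartiteGraph_adjMatrix_mulVec_inr]
      exact hf_sum (hX.not_existsUnique_inl_notMem j)
  · ext (i | j) <;> simp [hf, hg]
end

section
/- Let G be a bipartite graph with a pendant vertex v whose neighbor is w. Then |det(A(G))| = |det(A(G − {v,w}))| , hence if G is nonsingular so is G − {v,w}. -/
/-! Swapping the columns `v` and `w` of `A(G)` only changes the sign of the determinant, and
afterwards the off-diagonal entries of row `v` and of column `w` all vanish. Expanding along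
them leaves the minor on the remaining vertices, i.e. `det A(G) = -det A(G - {v, w})`. -/

open Matrix
open scoped Classical

namespace Matrix

variable {n R : Type*} [Fintype n] [DecidableEq n] [CommRing R]

theorem det_eq_mul_det_submatrix_of_row_offDiag_eq_zero (M : Matrix n n R) (i : n)
    (h : ∀ j ≠ i, M i j = 0) :
    M.det = M i i * (M.submatrix (Subtype.val : {j // j ≠ i} → n) Subtype.val).det := by
  rw [M.twoBlockTriangular_det' (· = i) fun k hk j hj => hk ▸ h j hj]
  congr 1
  convert det_eq_elem_of_subsingleton _ (⟨i, rfl⟩ : {k // k = i})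
  rfl

theorem det_eq_mul_det_submatrix_of_col_offDiag_eq_zero (M : Matrix n n R) (i : n)
    (h : ∀ j ≠ i, M j i = 0) :
    M.det = M i i * (M.submatrix (Subtype.val : {j // j ≠ i} → n) Subtype.val).det := by
  rw [← det_transpose, Mᵀ.det_eq_mul_det_submatrix_of_row_offDiag_eq_zero i h,
    ← transpose_submatrix, det_transpose, transpose_apply]

theorem det_eq_neg_mul_det_submatrix_of_pendant (A : Matrix n n R) {v w : n} (hvw : v ≠ w)
    (hrow : ∀ u ≠ w, A v u = 0) (hcol : ∀ u ≠ w, A u v = 0) :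
    A.det = -(A v w * A w v) *
      (A.submatrix (Subtype.val : {u // u ≠ v ∧ u ≠ w} → n) Subtype.val).det := by
  set B := A.submatrix id (Equiv.swap v w)
  let w' : {j // j ≠ v} := ⟨w, hvw.symm⟩
  set B₁ := B.submatrix (Subtype.val : {j // j ≠ v} → n) Subtype.val
  set B₂ := B₁.submatrix (Subtype.val : {j // j ≠ w'} → _) Subtype.val
  have hB : B.det = -A.det := by
    simp [B, det_permute', Equiv.Perm.sign_swap hvw]
  have hB₁ : B.det = A v w * B₁.det := by
    rw [B.det_eq_mul_det_submatrix_of_row_offDiag_eq_zero v fun j hj => hrow _ ?_]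
    · congr 1; simp [B]
    · simp [Equiv.swap_apply_eq_iff, hj]
  have hB₂ : B₁.det = A w v * B₂.det := by
    rw [B₁.det_eq_mul_det_submatrix_of_col_offDiag_eq_zero w' fun j hj => ?_]
    · congr 1; simp [B₁, B, w']
    · simpa [B₁, B, w'] using hcol j fun h => hj (Subtype.ext h)
  let e : {u // u ≠ v ∧ u ≠ w} ≃ {j : {j // j ≠ v} // j ≠ w'} :=
    { toFun := fun u => ⟨⟨u, u.2.1⟩, fun h => u.2.2 (congrArg Subtype.val h)⟩
      invFun := fun j => ⟨j, j.1.2, fun h => j.2 (Subtype.ext h)⟩ }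
  have hB₂_eq : B₂.submatrix e e = A.submatrix Subtype.val Subtype.val := by
    ext x y
    simp [B₂, B₁, B, e, Equiv.swap_apply_of_ne_of_ne y.2.1 y.2.2]
  calc A.det = -(A v w * (A w v * B₂.det)) := by rw [← hB₂, ← hB₁, hB, neg_neg]
    _ = _ := by rw [← det_submatrix_equiv_self e, hB₂_eq]; ring

end Matrix

namespace SimpleGraph

variable {V : Type*} (G : SimpleGraph V) [DecidableRel G.Adj]

theorem adjMatrix_induce {R : Type*} [Zero R] [One R] (s : Set V) :
    (G.induce s).adjMatrix R = (G.adjMatrix R).submatrix Subtype.val Subtype.val := by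
  ext x y
  simp [adjMatrix_apply]

theorem det_adjMatrix_eq_neg_det_adjMatrix_induce_of_degree_eq_one {R : Type*} [CommRing R]
    [Fintype V] [DecidableEq V] {v w : V} (hdeg : G.degree v = 1) (hadj : G.Adj v w) :
    (G.adjMatrix R).det = -((G.induce {u | u ≠ v ∧ u ≠ w}).adjMatrix R).det := by
  have hnbr : ∀ u, G.Adj v u → u = w :=
    fun u hu => (degree_eq_one_iff_existsUnique_adj.mp hdeg).unique hu hadj
  rw [(G.adjMatrix R).det_eq_neg_mul_det_submatrix_of_pendant (G.ne_of_adj hadj)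
    (fun u hu => ?_) (fun u hu => ?_), adjMatrix_induce]
  · simp [hadj, hadj.symm]
  · rw [adjMatrix_apply, if_neg (mt (hnbr u) hu)]
  · rw [adjMatrix_apply, if_neg fun h => hu (hnbr u h.symm)]

end SimpleGraph

theorem stmt15_general {V : Type*} [Fintype V] [DecidableEq V] (G : SimpleGraph V)
    [DecidableRel G.Adj] (v w : V)
    (hdeg : G.degree v = 1) (hadj : G.Adj v w) :
    |(G.adjMatrix ℝ).det| = |((G.induce {u : V | u ≠ v ∧ u ≠ w}).adjMatrix ℝ).det| ∧
    ((G.adjMatrix ℝ).det ≠ 0 →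
      ((G.induce {u : V | u ≠ v ∧ u ≠ w}).adjMatrix ℝ).det ≠ 0) := by
  rw [G.det_adjMatrix_eq_neg_det_adjMatrix_induce_of_degree_eq_one hdeg hadj, abs_neg,
    neg_ne_zero]
  exact ⟨rfl, id⟩

/-- If `v` is a pendant vertex of a bipartite graph `G` with neighbor `w`,
then |det A(G)| = |det A(G - {v, w})|; hence if G is nonsingular, so is G - {v, w}. -/
theorem stmt15 {V : Type*} [Fintype V] [DecidableEq V] (G : SimpleGraph V)
    [DecidableRel G.Adj] (hbip : G.Colorable 2) (v w : V)
    (hdeg : G.degree v = 1) (hadj : G.Adj v w) :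
    |(G.adjMatrix ℝ).det| = |((G.induce {u : V | u ≠ v ∧ u ≠ w}).adjMatrix ℝ).det| ∧
    ((G.adjMatrix ℝ).det ≠ 0 →
      ((G.induce {u : V | u ≠ v ∧ u ≠ w}).adjMatrix ℝ).det ≠ 0) :=
  stmt15_general G v w hdeg hadj
end

section
/- Let T be a linear hypertree on n vertices in which every edge has at least two vertices, and let x be a nullvector of T. Then the zero locus of x is a vertex cover of T: every edge contains a vertex v with x_v = 0. -/
/-!
Suppose some edge `e` of `E` avoids the zero locus of the nullvector `x`, and call such edges
nonvanishing. At a vertex `u` of a nonvanishing edge `f`, the term of `f` in `f_{T,u}(x) = 0` is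
nonzero, so some other edge through `u` has a nonzero term, and it is nonvanishing since `x u ≠ 0`.
Since edges have at least two vertices, we can leave each edge through a vertex other than the
one we entered by, producing an infinite walk that never immediately repeats a vertex or an edge.
As there are finitely many edges the walk repeats itself, and a repetition of minimal span is a
cycle.
-/

open Finset

/-- The hypergraph (with edge set `E`) is linear: two distinct edges share at most one
vertex. -/
def HyperLinear {V : Type*} [DecidableEq V] (E : Finset (Finset V)) : Prop :=
  ∀ e ∈ E, ∀ f ∈ E, e ≠ f → (e ∩ f).card ≤ 1

/-- The hypergraph is connected. -/
def HyperConnected {V : Type*} (E : Finset (Finset V)) : Prop :=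
  ∀ u v : V, Relation.ReflTransGen (fun a b => ∃ e ∈ E, a ∈ e ∧ b ∈ e) u v

/-- The hypergraph has a cycle: an alternating sequence of vertices and edges
`x₀, e₁, x₁, …, e_t, x_t` with `t ≥ 2`, distinct edges, vertices distinct except
`x₀ = x_t`, and `x_{i-1}, x_i ∈ e_i`. -/
def HasHyperCycle {V : Type*} (E : Finset (Finset V)) : Prop :=
  ∃ (t : ℕ) (x : Fin (t + 1) → V) (e : Fin t → Finset V),
    2 ≤ t ∧ Function.Injective e ∧
    (∀ i j : Fin t, x i.castSucc = x j.castSucc → i = j) ∧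
    x 0 = x (Fin.last t) ∧ (∀ i : Fin t, e i ∈ E) ∧
    ∀ i : Fin t, x i.castSucc ∈ e i ∧ x i.succ ∈ e i

/-- The Lagrangian polynomial of the link of `v`, evaluated at `x`:
`f_{H,v}(x) = Σ_{e ∋ v} Π_{w ∈ e \ {v}} x_w`. -/
noncomputable def linkPoly {V : Type*} [DecidableEq V] (E : Finset (Finset V)) (x : V → ℂ) (v : V) : ℂ :=
  ∑ e ∈ E.filter (fun e => v ∈ e), ∏ w ∈ e.erase v, x w

section

variable {V : Type*}

theorem HasHyperCycle.mono {E F : Finset (Finset V)} (hFE : F ⊆ E) (hF : HasHyperCycle F) :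
    HasHyperCycle E := by
  obtain ⟨t, x, e, ht, he, hx, hclose, hmem, hinc⟩ := hF
  exact ⟨t, x, e, ht, he, hx, hclose, fun i => hFE (hmem i), hinc⟩

theorem hasHyperCycle_of_cyclic {E : Finset (Finset V)} {t : ℕ} (ht : 2 ≤ t)
    (x : ℕ → V) (f : ℕ → Finset V)
    (hx : ∀ i j, i < j → j < t → x i ≠ x j) (hf : ∀ i j, i < j → j < t → f i ≠ f j)
    (hE : ∀ i < t, f i ∈ E) (hmem : ∀ i < t, x i ∈ f i)
    (hnext : ∀ i, i + 1 < t → x (i + 1) ∈ f i) (hlast : x 0 ∈ f (t - 1)) :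
    HasHyperCycle E := by
  have fin_injective {α : Type _} {g : ℕ → α} (hg : ∀ i j, i < j → j < t → g i ≠ g j) :
      Function.Injective fun i : Fin t => g i :=
    .of_lt_imp_ne fun i j hij => hg i j hij j.2
  refine ⟨t, fun i => x (i % t), fun i => f i, ht, fin_injective hf, ?_, ?_,
    fun i => hE i i.2, fun i => ⟨?_, ?_⟩⟩
  · intro i j hij
    simp only [Fin.val_castSucc, Nat.mod_eq_of_lt i.2, Nat.mod_eq_of_lt j.2] at hij
    exact fin_injective hx hij
  · simp
  · simpa [Nat.mod_eq_of_lt i.2] using hmem i i.2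
  · simp only [Fin.val_succ]
    obtain h | h := (show (i : ℕ) + 1 ≤ t from i.2).lt_or_eq
    · rw [Nat.mod_eq_of_lt h]
      exact hnext i h
    · rw [h, Nat.mod_self, (by omega : (i : ℕ) = t - 1)]
      exact hlast

structure IsNonbacktrackingWalk (E : Finset (Finset V)) (v : ℕ → V) (e : ℕ → Finset V) :
    Prop where
  edge_mem : ∀ n, e n ∈ E
  mem_edge : ∀ n, v n ∈ e n
  succ_mem_edge : ∀ n, v (n + 1) ∈ e n
  vertex_ne_succ : ∀ n, v n ≠ v (n + 1)
  edge_ne_succ : ∀ n, e n ≠ e (n + 1)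

theorem IsNonbacktrackingWalk.hasHyperCycle {E : Finset (Finset V)} {v : ℕ → V}
    {e : ℕ → Finset V} (hw : IsNonbacktrackingWalk E v e) : HasHyperCycle E := by
  classical
  have hrep : ∃ d, 0 < d ∧ ∃ a, v a = v (a + d) ∨ e a = e (a + d) := by
    obtain ⟨i, j, hij, heq⟩ := E.finite_toSet.exists_lt_map_eq_of_forall_mem hw.edge_mem
    exact ⟨j - i, by omega, i, .inr (by rwa [Nat.add_sub_cancel' hij.le])⟩
  obtain ⟨hd, a, ha⟩ := Nat.find_spec hrep
  set d := Nat.find hrep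
  have hmin : ∀ b c, b < c → c < b + d → v b ≠ v c ∧ e b ≠ e c := by
    intro b c hbc hcd
    have h := Nat.find_min hrep (show c - b < d by omega)
    simp only [not_and, not_exists, not_or] at h
    rw [← Nat.add_sub_cancel' hbc.le]
    exact h (by omega) b
  have hd2 : 2 ≤ d := by
    by_contra h
    rw [(by omega : d = 1)] at ha
    exact ha.elim (hw.vertex_ne_succ a) (hw.edge_ne_succ a)
  -- Minimality of `d` makes the window of the repetition injective; a repeated edge
  -- `e a = e (a + d)` closes the cycle `v (a + 1), e (a + 1), …, v (a + d), e (a + d), v (a + 1)`.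
  rcases ha with hv | he
  · refine hasHyperCycle_of_cyclic hd2 (fun i => v (a + i)) (fun i => e (a + i))
      (fun i j hij hj => (hmin _ _ (by omega) (by omega)).1)
      (fun i j hij hj => (hmin _ _ (by omega) (by omega)).2)
      (fun i _ => hw.edge_mem _) (fun i _ => hw.mem_edge _)
      (fun i _ => hw.succ_mem_edge _) ?_
    have h := hw.succ_mem_edge (a + (d - 1))
    rwa [(by omega : a + (d - 1) + 1 = a + d), ← hv] at h
  · refine hasHyperCycle_of_cyclic hd2 (fun i => v (a + 1 + i)) (fun i => e (a + 1 + i))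
      (fun i j hij hj => (hmin _ _ (by omega) (by omega)).1)
      (fun i j hij hj => (hmin _ _ (by omega) (by omega)).2)
      (fun i _ => hw.edge_mem _) (fun i _ => hw.mem_edge _)
      (fun i _ => hw.succ_mem_edge _) ?_
    simp only [add_zero, (by omega : a + 1 + (d - 1) = a + d), ← he]
    exact hw.succ_mem_edge a

theorem exists_isNonbacktrackingWalk {E : Finset (Finset V)} (hne : E.Nonempty)
    (hcard : ∀ e ∈ E, 2 ≤ e.card) (hdeg : ∀ e ∈ E, ∀ u ∈ e, ∃ f ∈ E, f ≠ e ∧ u ∈ f) :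
    ∃ v e, IsNonbacktrackingWalk E v e := by
  let State := {p : Finset V × V // p.1 ∈ E ∧ p.2 ∈ p.1}
  have step : ∀ p : State, ∃ q : State, q.1.1 ≠ p.1.1 ∧ q.1.2 ≠ p.1.2 ∧ q.1.2 ∈ p.1.1 := by
    rintro ⟨⟨f, u⟩, hf, hu⟩
    obtain ⟨u', hu', hu'u⟩ := Finset.exists_mem_ne (hcard f hf) u
    obtain ⟨g, hg, hgf, hu'g⟩ := hdeg f hf u' hu'
    exact ⟨⟨(g, u'), hg, hu'g⟩, hgf, hu'u, hu'⟩
  choose next hnext using step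
  obtain ⟨e₀, he₀⟩ := hne
  obtain ⟨v₀, hv₀⟩ := Finset.card_pos.1 (by have := hcard e₀ he₀; omega : 0 < e₀.card)
  let walk (n : ℕ) : State := next^[n] ⟨(e₀, v₀), he₀, hv₀⟩
  have walk_succ (n : ℕ) : walk (n + 1) = next (walk n) := Function.iterate_succ_apply' _ _ _
  refine ⟨fun n => (walk n).1.2, fun n => (walk n).1.1,
    ⟨fun n => (walk n).2.1, fun n => (walk n).2.2, fun n => ?_, fun n => ?_, fun n => ?_⟩⟩
  · simpa only [walk_succ] using (hnext (walk n)).2.2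
  · simpa only [walk_succ] using (hnext (walk n)).2.1.symm
  · simpa only [walk_succ] using (hnext (walk n)).1.symm

theorem hasHyperCycle_of_forall_mem_exists_ne {E : Finset (Finset V)} (hne : E.Nonempty)
    (hcard : ∀ e ∈ E, 2 ≤ e.card) (hdeg : ∀ e ∈ E, ∀ u ∈ e, ∃ f ∈ E, f ≠ e ∧ u ∈ f) :
    HasHyperCycle E :=
  let ⟨_, _, hw⟩ := exists_isNonbacktrackingWalk hne hcard hdeg
  hw.hasHyperCycle

theorem exists_ne_forall_ne_zero_of_linkPoly_eq_zero [DecidableEq V] {E : Finset (Finset V)}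
    {x : V → ℂ} {u : V} (hxu : linkPoly E x u = 0) {f : Finset V} (hf : f ∈ E) (hu : u ∈ f)
    (hnz : ∀ w ∈ f, x w ≠ 0) : ∃ g ∈ E, g ≠ f ∧ u ∈ g ∧ ∀ w ∈ g, x w ≠ 0 := by
  by_contra! h
  have hterm : ∏ w ∈ f.erase u, x w ≠ 0 :=
    prod_ne_zero_iff.2 fun w hw => hnz w (mem_of_mem_erase hw)
  rw [linkPoly, sum_eq_single_of_mem f (mem_filter.2 ⟨hf, hu⟩)] at hxu
  · exact hterm hxu
  intro g hg hgf
  obtain ⟨hgE, hug⟩ := mem_filter.1 hg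
  obtain ⟨w, hw, hxw⟩ := h g hgE hgf hug
  have hwu : w ≠ u := by rintro rfl; exact hnz w hu hxw
  exact prod_eq_zero (mem_erase.2 ⟨hwu, hw⟩) hxw

end

theorem stmt16_general {V : Type*} [DecidableEq V] (E : Finset (Finset V))
    (hrank : ∀ e ∈ E, 2 ≤ e.card)
    (hacyclic : ¬ HasHyperCycle E)
    (x : V → ℂ) (hx : ∀ v : V, linkPoly E x v = 0) :
    ∀ e ∈ E, ∃ v ∈ e, x v = 0 := by
  intro e he
  by_contra! hnz
  have hcycle : HasHyperCycle (E.filter fun f => ∀ w ∈ f, x w ≠ 0) := by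
    refine hasHyperCycle_of_forall_mem_exists_ne ⟨e, mem_filter.2 ⟨he, hnz⟩⟩
      (fun f hf => hrank f (mem_filter.1 hf).1) fun f hf u hu => ?_
    obtain ⟨hfE, hfnz⟩ := mem_filter.1 hf
    obtain ⟨g, hg, hgf, hug, hgnz⟩ :=
      exists_ne_forall_ne_zero_of_linkPoly_eq_zero (hx u) hfE hu hfnz
    exact ⟨g, mem_filter.2 ⟨hg, hgnz⟩, hgf, hug⟩
  exact hacyclic (hcycle.mono (filter_subset _ E))

/-- For a linear hypertree in which every edge has at least two vertices,
the zero locus of any nullvector is a vertex cover: every edge contains a vertex where the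
nullvector vanishes. -/
theorem stmt16 {V : Type*} [Fintype V] [DecidableEq V] (E : Finset (Finset V))
    (hlin : HyperLinear E) (hrank : ∀ e ∈ E, 2 ≤ e.card)
    (hconn : HyperConnected E) (hacyclic : ¬ HasHyperCycle E)
    (x : V → ℂ) (hx : ∀ v : V, linkPoly E x v = 0) :
    ∀ e ∈ E, ∃ v ∈ e, x v = 0 :=
  stmt16_general E hrank hacyclic x hx
end

section
/- Let 2 ≤ k ≤ n and let y ∈ ℂ^n satisfy (∂e_k/∂x_u)(y) = 0 for all u ∈ [n]. Then at least n − k + 2 coordinates of y are zero. -/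
/-!
Write `e_j(T)` for the `j`-th elementary symmetric function of the `y i`, `i ∈ T`. Expanding
`e_k` along the variable `x_u` shows `∂e_k/∂x_u (y) = e_{k-1}([n] \ {u})`, and zero coordinates
can be dropped, so everything happens on the support `T` of `y`. There the recursion
`e_{j+1}(T) = e_{j+1}(T \ {u}) + y_u e_j(T \ {u})` with `y_u ≠ 0`, and the double count
`∑_{u ∈ T} e_j(T \ {u}) = (|T| - j) e_j(T)` push the vanishing of `e_j(T)` and of all
`e_j(T \ {u})` down from `j = k - 1` to `j = 0`, contradicting `e_0 = 1` unless `|T| < k - 1`.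
-/

open MvPolynomial Finset

namespace Multiset

variable {R : Type*} [CommSemiring R]

theorem esymm_cons_succ (a : R) (s : Multiset R) (j : ℕ) :
    (a ::ₘ s).esymm (j + 1) = s.esymm (j + 1) + a * s.esymm j := by
  simp only [esymm, powersetCard_cons, map_add, sum_add, map_map, Function.comp_def, prod_cons,
    sum_map_mul_left]

theorem _root_.Derivation.map_esymm_eq_zero {A M : Type*} [CommSemiring A] [Algebra R A]
    [AddCommMonoid M] [Module A M] [Module R M] (D : Derivation R A M) {s : Multiset A}
    (hs : ∀ a ∈ s, D a = 0) (j : ℕ) : D (s.esymm j) = 0 := by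
  induction s using Multiset.induction generalizing j with
  | empty => cases j <;> simp [esymm, powersetCard_zero_right]
  | cons a s ih =>
    cases j with
    | zero => simp [esymm]
    | succ j =>
      simp [esymm_cons_succ, ih (fun b hb => hs b (mem_cons_of_mem hb)), hs a (mem_cons_self a s)]

end Multiset

section

variable {σ R : Type*} [CommSemiring R]

theorem map_multiset_esymm {S F : Type*} [CommSemiring S] [FunLike F R S] [RingHomClass F R S]
    (f : F) (s : Multiset R) (j : ℕ) : f (s.esymm j) = (s.map f).esymm j := by
  simp [Multiset.esymm, map_multiset_sum, map_multiset_prod, Multiset.powersetCard_map,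
    Multiset.map_map]

theorem Finset.esymm_map_val_filter_ne_zero [DecidableEq R] (y : σ → R) (T : Finset σ) (j : ℕ) :
    ({i ∈ T | y i ≠ 0}.val.map y).esymm j = (T.val.map y).esymm j := by
  simp only [esymm_map_val]
  refine sum_subset (powersetCard_mono (filter_subset _ T)) fun A hA hAnot => ?_
  obtain ⟨hAT, hAcard⟩ := mem_powersetCard.mp hA
  obtain ⟨i, hiA, hyi⟩ : ∃ i ∈ A, y i = 0 := by
    by_contra! hA'
    exact hAnot (mem_powersetCard.mpr ⟨fun i hi => mem_filter.mpr ⟨hAT hi, hA' i hi⟩, hAcard⟩)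
  exact prod_eq_zero hiA hyi

variable [DecidableEq σ]

theorem Finset.esymm_map_val_of_mem (y : σ → R) {T : Finset σ} {u : σ} (hu : u ∈ T) (j : ℕ) :
    (T.val.map y).esymm (j + 1) =
      ((T.erase u).val.map y).esymm (j + 1) + y u * ((T.erase u).val.map y).esymm j := by
  rw [← Multiset.esymm_cons_succ, ← Multiset.map_cons, ← insert_val_of_notMem (notMem_erase u T),
    insert_erase hu]

theorem Finset.sum_esymm_map_val_erase (y : σ → R) (T : Finset σ) (j : ℕ) :
    ∑ u ∈ T, ((T.erase u).val.map y).esymm j = (#T - j) • (T.val.map y).esymm j := by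
  simp only [esymm_map_val, smul_sum]
  rw [sum_comm' (t' := T.powersetCard j) (s' := fun A => T \ A)]
  · refine sum_congr rfl fun A hA => ?_
    obtain ⟨hAT, hAcard⟩ := mem_powersetCard.mp hA
    rw [sum_const, card_sdiff_of_subset hAT, hAcard]
  · intro u A
    simp only [mem_powersetCard, subset_erase, mem_sdiff]
    tauto

theorem MvPolynomial.pderiv_esymm_succ [Fintype σ] (u : σ) (j : ℕ) :
    pderiv u (esymm σ R (j + 1)) =
      ((univ.erase u).val.map (X : σ → MvPolynomial σ R)).esymm j := by
  have hvars : ∀ p ∈ (univ.erase u).val.map (X : σ → MvPolynomial σ R), pderiv u p = 0 := by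
    simp only [Multiset.mem_map, mem_val, mem_erase]
    rintro _ ⟨i, ⟨hi, -⟩, rfl⟩
    exact pderiv_X_of_ne hi
  rw [esymm_eq_multiset_esymm, esymm_map_val_of_mem X (mem_univ u), map_add, Derivation.leibniz,
    (pderiv u).map_esymm_eq_zero hvars, (pderiv u).map_esymm_eq_zero hvars, pderiv_X_self]
  simp

end

section

variable {σ R : Type*} [CommSemiring R] [NoZeroDivisors R] [DecidableEq σ]
  {y : σ → R} {T : Finset σ} {j : ℕ}

theorem Finset.esymm_map_val_erase_eq_zero_of_succ (hy : ∀ i ∈ T, y i ≠ 0)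
    (hT : (T.val.map y).esymm (j + 1) = 0)
    (h : ∀ u ∈ T, ((T.erase u).val.map y).esymm (j + 1) = 0) :
    ∀ u ∈ T, ((T.erase u).val.map y).esymm j = 0 := by
  intro u hu
  have hrec := esymm_map_val_of_mem y hu j
  rw [hT, h u hu, zero_add, eq_comm, mul_eq_zero] at hrec
  exact hrec.resolve_left (hy u hu)

variable [CharZero R]

theorem Finset.esymm_map_val_eq_zero_of_forall_erase (hj : j < #T)
    (h : ∀ u ∈ T, ((T.erase u).val.map y).esymm j = 0) : (T.val.map y).esymm j = 0 := by
  have hsum := sum_esymm_map_val_erase y T j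
  rw [sum_eq_zero h, eq_comm, nsmul_eq_mul, mul_eq_zero, Nat.cast_eq_zero] at hsum
  exact hsum.resolve_left (by omega)

theorem Finset.card_lt_of_esymm_map_val_eq_zero (hy : ∀ i ∈ T, y i ≠ 0)
    (hT : (T.val.map y).esymm j = 0) (h : ∀ u ∈ T, ((T.erase u).val.map y).esymm j = 0) :
    #T < j := by
  by_contra! hjT
  have hdescent : ∀ i ≤ j,
      (T.val.map y).esymm i = 0 ∧ ∀ u ∈ T, ((T.erase u).val.map y).esymm i = 0 := by
    intro i hi
    induction hi using Nat.decreasingInduction with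
    | self => exact ⟨hT, h⟩
    | of_succ i hij ih =>
      have herase := esymm_map_val_erase_eq_zero_of_succ hy ih.1 ih.2
      exact ⟨esymm_map_val_eq_zero_of_forall_erase (by omega) herase, herase⟩
  simpa [Multiset.esymm] using (hdescent 0 j.zero_le).1

end

/-- If 2 ≤ k ≤ n and y ∈ ℂⁿ is a common zero of all partial derivatives of
the k-th elementary symmetric polynomial, then at least n − k + 2 coordinates of y are
zero. -/
theorem stmt18 (n k : ℕ) (hk : 2 ≤ k) (hkn : k ≤ n) (y : Fin n → ℂ)
    (h : ∀ u : Fin n, eval y (pderiv u (esymm (Fin n) ℂ k)) = 0) :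
    n - k + 2 ≤ {i : Fin n | y i = 0}.ncard := by
  classical
  obtain ⟨j, rfl⟩ : ∃ j, k = j + 1 := ⟨k - 1, by omega⟩
  set T : Finset (Fin n) := {i | y i ≠ 0}
  have herase : ∀ u, ((T.erase u).val.map y).esymm j = 0 := fun u => by
    rw [← filter_erase, esymm_map_val_filter_ne_zero, ← h u, pderiv_esymm_succ,
      map_multiset_esymm, Multiset.map_map]
    simp
  have hT : (T.val.map y).esymm j = 0 := by
    by_cases hTuniv : T = univ
    · refine esymm_map_val_eq_zero_of_forall_erase ?_ fun u _ => herase u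
      rw [hTuniv, card_univ, Fintype.card_fin]
      omega
    · obtain ⟨u, hu⟩ := not_forall.mp (mt eq_univ_of_forall hTuniv)
      simpa [erase_eq_of_notMem hu] using herase u
  have hcard : #T < j := card_lt_of_esymm_map_val_eq_zero (fun i hi => (mem_filter.mp hi).2) hT
    fun u _ => herase u
  have hzeros : {i : Fin n | y i = 0} = ((Tᶜ : Finset (Fin n)) : Set (Fin n)) := by
    ext i
    simp [T]
  rw [hzeros, Set.ncard_coe_finset, card_compl, Fintype.card_fin]
  omega
end

section
/- Let K be the complete k-uniform hypergraph on n vertices, 2 ≤ k ≤ n, and U ⊆ [n]. Then U is a stalled (SZF-closed) set for the hypergraph skew zero forcing rule if and only if |U| ∉ {n−k, n−k+1}. -/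
open Finset

/-!
Removing `v` identifies the edges through `v` that avoid `U` with the `(k - 1)`-subsets of
`Uᶜ.erase v`, so there are `C(|Uᶜ.erase v|, k - 1)` of them. Since `k - 1 ≥ 1`, this count is `1`
exactly when `|Uᶜ.erase v| = k - 1`. As `v` ranges over `[n]`, `|Uᶜ.erase v|` takes the value
`|Uᶜ|` (for `v ∈ U`) or `|Uᶜ| - 1` (for `v ∉ U`), so some vertex can force iff
`|Uᶜ| ∈ {k - 1, k}`, i.e. iff `|U| ∈ {n - k + 1, n - k}`.
-/

variable {α : Type*} [Fintype α] [DecidableEq α]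

theorem card_filter_mem_erase_disjoint (U : Finset α) (v : α) (k : ℕ) :
    #{e : Finset α | #e = k + 1 ∧ v ∈ e ∧ e.erase v ∩ U = ∅} = (#(Uᶜ.erase v)).choose k := by
  rw [← card_powersetCard]
  refine card_nbij' (·.erase v) (insert v) ?_ ?_ ?_ ?_
  · intro e he
    simp only [coe_filter, Set.mem_ofPred_eq, mem_univ, true_and] at he
    obtain ⟨hcard, hv, hU⟩ := he
    rw [mem_coe, mem_powersetCard, card_erase_of_mem hv, hcard, add_tsub_cancel_right]
    refine ⟨fun x hx => mem_erase.2 ⟨ne_of_mem_erase hx, mem_compl.2 fun hxU => ?_⟩, rfl⟩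
    simpa [hU] using mem_inter.2 ⟨hx, hxU⟩
  · intro s hs
    rw [mem_coe, mem_powersetCard] at hs
    obtain ⟨hsub, hcard⟩ := hs
    have hvs : v ∉ s := fun h => by simpa using hsub h
    simp only [coe_filter, Set.mem_ofPred_eq, mem_univ, true_and]
    refine ⟨by rw [card_insert_of_notMem hvs, hcard], mem_insert_self v s, ?_⟩
    rw [erase_insert hvs, ← disjoint_iff_inter_eq_empty]
    exact disjoint_left.2 fun x hx => (mem_compl.1 (mem_of_mem_erase (hsub hx)))
  · intro e he
    simp only [coe_filter, Set.mem_ofPred_eq, mem_univ, true_and] at he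
    exact insert_erase he.2.1
  · intro s hs
    rw [mem_coe, mem_powersetCard] at hs
    exact erase_insert fun h => by simpa using hs.1 h

theorem exists_card_compl_erase_eq_iff (U : Finset α) {m : ℕ} (hm : m < Fintype.card α) :
    (∃ v, #(Uᶜ.erase v) = m) ↔ #Uᶜ = m ∨ #Uᶜ = m + 1 := by
  constructor
  · rintro ⟨v, rfl⟩
    by_cases hv : v ∈ U
    · exact .inl (by rw [erase_eq_of_notMem (notMem_compl.2 hv)])
    · have hvc : v ∈ Uᶜ := mem_compl.2 hv
      exact .inr (by rw [card_erase_of_mem hvc, Nat.sub_add_cancel (card_pos.2 ⟨v, hvc⟩)])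
  · rintro (hc | hc)
    · obtain ⟨v, hv⟩ : U.Nonempty := by
        rw [nonempty_iff_ne_empty]
        rintro rfl
        rw [compl_empty, card_univ] at hc
        omega
      exact ⟨v, by rwa [erase_eq_of_notMem (notMem_compl.2 hv)]⟩
    · obtain ⟨v, hv⟩ : Uᶜ.Nonempty := card_pos.1 (by omega)
      exact ⟨v, by rw [card_erase_of_mem hv, hc, add_tsub_cancel_right]⟩

/-- For the complete k-uniform hypergraph on [n] (2 ≤ k ≤ n), a set U of
vertices is stalled (SZF-closed) — i.e., for every vertex v, the number of edges e
containing v with (e \ {v}) ∩ U = ∅ is not equal to 1 — iff |U| ∉ {n−k, n−k+1}. -/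
theorem stmt19 (n k : ℕ) (hk : 2 ≤ k) (hkn : k ≤ n) (U : Finset (Fin n)) :
    (∀ v : Fin n,
      (Finset.univ.filter
        (fun e : Finset (Fin n) => e.card = k ∧ v ∈ e ∧ e.erase v ∩ U = ∅)).card ≠ 1)
    ↔ (U.card ≠ n - k ∧ U.card ≠ n - k + 1) := by
  obtain ⟨j, rfl⟩ : ∃ j, k = j + 1 := ⟨k - 1, by omega⟩
  have hcount (v : Fin n) :
      #{e : Finset (Fin n) | #e = j + 1 ∧ v ∈ e ∧ e.erase v ∩ U = ∅} = 1 ↔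
        #(Uᶜ.erase v) = j := by
    rw [card_filter_mem_erase_disjoint, Nat.choose_eq_one_iff]
    omega
  have hcompl : #Uᶜ = n - #U := by rw [card_compl, Fintype.card_fin]
  have hU : #U ≤ n := card_le_univ U |>.trans_eq (Fintype.card_fin n)
  simp only [ne_eq, hcount, ← not_exists,
    exists_card_compl_erase_eq_iff U (show j < Fintype.card (Fin n) by simp; omega), hcompl]
  omega
end
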